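/- arXiv:1311.6856 — 3 statements merged into one kernel-verified Lean document; each statement's English description precedes it below -/
import Mathlib

section
/- Let n ≥ 2 and let Q^n denote the n-dimensional hypercube graph. If F is a set of vertices of Q^n with |F| ≤ 2n − 3, then the induced subgraph of Q^n on the complement of F has at most 2 connected components. -/
open SimpleGraph

/-- The `n`-cube `Qⁿ`: vertices are the 0-1 vectors of length `n`, adjacent iff they
differ in exactly one coordinate. -/
def cubeGraph (n : ℕ) : SimpleGraph (Fin n → Bool) :=
  SimpleGraph.fromRel fun a b => ∃! i, a i ≠ b i

namespace CubeFault

variable {n : ℕ}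

def flip (i : Fin n) (x : Fin n → Bool) : Fin n → Bool := Function.update x i (!(x i))

lemma flip_apply_self (i : Fin n) (x : Fin n → Bool) : flip i x i = !(x i) :=
  Function.update_self _ _ _

lemma flip_apply_ne {i j : Fin n} (h : j ≠ i) (x : Fin n → Bool) : flip i x j = x j :=
  Function.update_of_ne h _ _

lemma flip_flip (i : Fin n) (x : Fin n → Bool) : flip i (flip i x) = x := by
  funext j
  by_cases h : j = i
  · subst h; simp [flip_apply_self]
  · rw [flip_apply_ne h, flip_apply_ne h]

lemma flip_injective (i : Fin n) : Function.Injective (flip i) :=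
  Function.LeftInverse.injective (g := flip i) (flip_flip i)

lemma flip_ne (i : Fin n) (x : Fin n → Bool) : flip i x ≠ x := by
  intro h
  have := congrFun h i
  rw [flip_apply_self] at this
  simp at this

lemma flip_left_injective {i j : Fin n} (x : Fin n → Bool) (h : flip i x = flip j x) : i = j := by
  by_contra hij
  have := congrFun h i
  rw [flip_apply_self, flip_apply_ne hij] at this
  simp at this

lemma flip_comm {i j : Fin n} (h : i ≠ j) (x : Fin n → Bool) :
    flip i (flip j x) = flip j (flip i x) := by
  funext k
  by_cases hk : k = i
  · subst hk
    rw [flip_apply_self, flip_apply_ne h, flip_apply_ne h, flip_apply_self]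
  · by_cases hk2 : k = j
    · subst hk2
      rw [flip_apply_ne hk, flip_apply_self, flip_apply_self, flip_apply_ne hk]
    · rw [flip_apply_ne hk, flip_apply_ne hk2, flip_apply_ne hk2, flip_apply_ne hk]

def diffOne (a b : Fin n → Bool) : Prop := ∃! i, a i ≠ b i

lemma diffOne_symm {a b : Fin n → Bool} (h : diffOne a b) : diffOne b a := by
  obtain ⟨i, hi, hu⟩ := h
  exact ⟨i, Ne.symm hi, fun j hj => hu j (Ne.symm hj)⟩

lemma diffOne_flip (i : Fin n) (x : Fin n → Bool) : diffOne x (flip i x) := by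
  refine ⟨i, ?_, ?_⟩
  · show x i ≠ flip i x i
    rw [flip_apply_self]; cases x i <;> simp
  · intro j hj
    change x j ≠ flip i x j at hj
    by_contra hji
    rw [flip_apply_ne hji] at hj
    exact hj rfl

lemma eq_flip_of_diffOne {a b : Fin n → Bool} (h : diffOne a b) : ∃ i, b = flip i a := by
  obtain ⟨i, hi, hu⟩ := h
  refine ⟨i, funext fun j => ?_⟩
  by_cases hj : j = i
  · subst hj
    rw [flip_apply_self]
    revert hi; cases a j <;> cases b j <;> simp
  · rw [flip_apply_ne hj]
    by_contra hne
    exact hj (hu j (Ne.symm hne))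

lemma ne_of_diffOne {a b : Fin n → Bool} (h : diffOne a b) : a ≠ b := by
  obtain ⟨i, hi, _⟩ := h
  intro hab; exact hi (by rw [hab])

def Rel (F : Finset (Fin n → Bool)) (a b : Fin n → Bool) : Prop :=
  diffOne a b ∧ a ∉ F ∧ b ∉ F

def Reach (F : Finset (Fin n → Bool)) : (Fin n → Bool) → (Fin n → Bool) → Prop :=
  Relation.ReflTransGen (Rel F)

lemma rel_symm (F : Finset (Fin n → Bool)) : Symmetric (Rel F) :=
  fun _ _ h => ⟨diffOne_symm h.1, h.2.2, h.2.1⟩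

lemma reach_symm {F : Finset (Fin n → Bool)} {a b : Fin n → Bool} (h : Reach F a b) :
    Reach F b a := (@Relation.ReflTransGen.symmetric _ _ ⟨fun _ _ h' => rel_symm F h'⟩).symm _ _ h

lemma not_mem_of_reach {F : Finset (Fin n → Bool)} {a b : Fin n → Bool}
    (h : Reach F a b) (ha : a ∉ F) : b ∉ F := by
  induction h with
  | refl => exact ha
  | tail _ h2 _ => exact h2.2.2

/-- Connectivity of subcubes: if fewer faults (inside the subcube) than the dimension
of the subcube, any two subcube vertices are connected avoiding faults. -/
lemma connL (s : Finset (Fin n)) :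
    ∀ (F : Finset (Fin n → Bool)) (u v : Fin n → Bool), u ∉ F → v ∉ F →
      (∀ j, j ∉ s → u j = v j) →
      (F.filter (fun w => ∀ j, j ∉ s → u j = w j)).card < s.card →
      Reach F u v := by
  classical
  induction s using Finset.strongInduction with
  | _ s ih =>
  intro F u v hu hv hsame hcard
  by_cases huv : u = v
  · subst huv; exact Relation.ReflTransGen.refl
  obtain ⟨i, hi⟩ : ∃ i, u i ≠ v i := by
    by_contra h; push_neg at h; exact huv (funext h)
  have his : i ∈ s := by by_contra h; exact hi (hsame i h)
  set t := s.erase i with ht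
  have hts : t ⊂ s := Finset.erase_ssubset his
  have htcard : t.card + 1 = s.card := Finset.card_erase_add_one his
  have hsplit : ∀ (x w : Fin n → Bool),
      (∀ j, j ∉ t → x j = w j) ↔ ((∀ j, j ∉ s → x j = w j) ∧ x i = w i) := by
    intro x w
    constructor
    · intro h
      exact ⟨fun j hj => h j (fun hmem => hj (Finset.mem_of_mem_erase hmem)),
        h i (Finset.notMem_erase i s)⟩
    · rintro ⟨h1, h2⟩ j hj
      by_cases hji : j = i
      · subst hji; exact h2
      · refine h1 j (fun hjs => hj ?_)
        exact Finset.mem_erase.mpr ⟨hji, hjs⟩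
  set Fs := F.filter (fun w => ∀ j, j ∉ s → u j = w j) with hFs
  set F0 := Fs.filter (fun w => u i = w i) with hF0def
  set F1 := Fs.filter (fun w => ¬ (u i = w i)) with hF1def
  have hsumcard : F0.card + F1.card = Fs.card := by
    rw [hF0def, hF1def]
    exact Finset.card_filter_add_card_filter_not (s := Fs) (p := fun w => u i = w i)
  have hF0eq : F.filter (fun w => ∀ j, j ∉ t → u j = w j) = F0 := by
    ext w
    simp only [hF0def, hFs, Finset.mem_filter, hsplit u w]
    tauto
  have hvi : v i = !(u i) := by revert hi; cases u i <;> cases v i <;> simp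
  by_cases hF0 : F0.card < t.card
  · -- u's half has few faults; route v into u's half
    set v2 := flip i v with hv2
    have hv2i : v2 i = u i := by
      rw [hv2, flip_apply_self, hvi]; simp
    have hsame_uv2 : ∀ j, j ∉ t → u j = v2 j := by
      rw [hsplit]
      refine ⟨fun j hj => ?_, hv2i.symm⟩
      have hji : j ≠ i := fun hji => hj (hji ▸ his)
      rw [hv2, flip_apply_ne hji]
      exact hsame j hj
    have hsame_s_uv2 : ∀ j, j ∉ s → u j = v2 j :=
      fun j hj => hsame_uv2 j (fun hmem => hj (Finset.mem_of_mem_erase hmem))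
    by_cases hv2F : v2 ∈ F
    · -- v's crossing partner is faulty: find a good neighbor
      have hv2F0 : v2 ∈ F0 := by
        rw [hF0def, hFs]
        exact Finset.mem_filter.mpr ⟨Finset.mem_filter.mpr ⟨hv2F, hsame_s_uv2⟩, hv2i.symm⟩
      have hv2Fs : v2 ∈ Fs := Finset.mem_filter.mp hv2F0 |>.1
      have hgood : ∃ j ∈ t, flip j v ∉ F ∧ flip j v2 ∉ F := by
        by_contra hbad
        push_neg at hbad
        set φ : Fin n → (Fin n → Bool) := fun j => if flip j v ∈ F then flip j v else flip j v2
          with hφ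
        have hsame_sv : ∀ j ∈ t, ∀ l, l ∉ s → u l = flip j v l := by
          intro j hjt l hl
          have hlj : l ≠ j := fun h => hl (h ▸ Finset.mem_of_mem_erase hjt)
          rw [flip_apply_ne hlj]
          exact hsame l hl
        have hsame_sv2 : ∀ j ∈ t, ∀ l, l ∉ s → u l = flip j v2 l := by
          intro j hjt l hl
          have hlj : l ≠ j := fun h => hl (h ▸ Finset.mem_of_mem_erase hjt)
          rw [flip_apply_ne hlj]
          exact hsame_s_uv2 l hl
        have hφmem : ∀ j ∈ t, φ j ∈ Fs.erase v2 := by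
          intro j hjt
          have hji : j ≠ i := (Finset.mem_erase.mp hjt).1
          rw [hφ]
          by_cases hc : flip j v ∈ F
          · simp only [if_pos hc]
            refine Finset.mem_erase.mpr ⟨?_, Finset.mem_filter.mpr ⟨hc, hsame_sv j hjt⟩⟩
            intro heq
            have := congrFun heq i
            rw [flip_apply_ne (Ne.symm hji)] at this
            rw [this, hv2i] at hvi
            simp at hvi
          · simp only [if_neg hc]
            have hc2 : flip j v2 ∈ F := (hbad j hjt hc)
            refine Finset.mem_erase.mpr ⟨?_, Finset.mem_filter.mpr ⟨hc2, hsame_sv2 j hjt⟩⟩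
            intro heq
            exact flip_ne j v2 heq
        have hφinj : Set.InjOn φ ↑t := by
          intro j1 hj1 j2 hj2 heq
          rw [hφ] at heq
          simp only at heq
          by_contra hne
          -- analyze cases
          have hval : ∀ (a b : Fin n → Bool) (j1 j2 : Fin n), j1 ≠ j2 →
              a i ≠ b i → (flip j1 a) = (flip j2 b) → j1 ≠ i → j2 ≠ i → False := by
            intro a b k1 k2 _ habi heq' hk1 hk2
            have := congrFun heq' i
            rw [flip_apply_ne (Ne.symm hk1), flip_apply_ne (Ne.symm hk2)] at this
            exact habi this
          have hvv2 : v i ≠ v2 i := by rw [hv2i, hvi]; simp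
          have hj1i : j1 ≠ i := (Finset.mem_erase.mp (by exact_mod_cast hj1)).1
          have hj2i : j2 ≠ i := (Finset.mem_erase.mp (by exact_mod_cast hj2)).1
          by_cases hc1 : flip j1 v ∈ F <;> by_cases hc2 : flip j2 v ∈ F <;>
            simp only [if_pos, if_neg, hc1, hc2] at heq
          · exact hne (flip_left_injective v heq)
          · exact hval v v2 j1 j2 hne hvv2 heq hj1i hj2i
          · exact hval v2 v j1 j2 hne (Ne.symm hvv2) heq hj1i hj2i
          · exact hne (flip_left_injective v2 heq)
        have h1 : t.card ≤ (Fs.erase v2).card :=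
          Finset.card_le_card_of_injOn φ hφmem hφinj
        have h2 : (Fs.erase v2).card = Fs.card - 1 := Finset.card_erase_of_mem hv2Fs
        have h3 : 1 ≤ Fs.card := Finset.card_pos.mpr ⟨v2, hv2Fs⟩
        omega
      obtain ⟨j, hjt, hwF, hw2F⟩ := hgood
      have hji : j ≠ i := (Finset.mem_erase.mp hjt).1
      set w := flip j v with hwdef
      set w2 := flip j v2 with hw2def
      have hw2w : w2 = flip i w := by
        rw [hw2def, hwdef, hv2, flip_comm (Ne.symm hji)]
      have hsame_uw2 : ∀ l, l ∉ t → u l = w2 l := by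
        rw [hsplit]
        constructor
        · intro l hl
          have hlj : l ≠ j := fun h => hl (h ▸ Finset.mem_of_mem_erase hjt)
          rw [hw2def, flip_apply_ne hlj]
          exact hsame_s_uv2 l hl
        · rw [hw2def, flip_apply_ne (Ne.symm hji), hv2i]
      have hru : Reach F u w2 := by
        by_cases h : u = w2
        · rw [h]; exact Relation.ReflTransGen.refl
        · exact ih t hts F u w2 hu hw2F hsame_uw2 (by rw [hF0eq]; exact hF0)
      have hstep1 : Rel F w2 w := by
        rw [hw2w]
        exact ⟨diffOne_symm (diffOne_flip i w), hw2w ▸ hw2F, hwF⟩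
      have hstep2 : Rel F w v := ⟨diffOne_symm (diffOne_flip j v), hwF, hv⟩
      exact (hru.tail hstep1).tail hstep2
    · -- crossing partner is fine
      have hru : Reach F u v2 := by
        by_cases h : u = v2
        · rw [h]; exact Relation.ReflTransGen.refl
        · exact ih t hts F u v2 hu hv2F hsame_uv2 (by rw [hF0eq]; exact hF0)
      have hstep : Rel F v2 v := ⟨diffOne_symm (diffOne_flip i v), hv2F, hv⟩
      exact hru.tail hstep
  · -- u's half is full of faults; the other half has none
    have hF1empty : F1 = ∅ := by
      have : Fs.card < s.card := hcard
      have : F1.card = 0 := by omega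
      exact Finset.card_eq_zero.mp this
    set u2 := flip i u with hu2def
    have hu2i : u2 i = v i := by rw [hu2def, flip_apply_self, hvi]
    have hu2F : u2 ∉ F := by
      intro h
      have : u2 ∈ F1 := by
        rw [hF1def, hFs]
        refine Finset.mem_filter.mpr ⟨Finset.mem_filter.mpr ⟨h, ?_⟩, ?_⟩
        · intro j hj
          have hji : j ≠ i := fun hji => hj (hji ▸ his)
          rw [hu2def, flip_apply_ne hji]
        · rw [hu2def, flip_apply_self]; cases u i <;> simp
      rw [hF1empty] at this
      simp at this
    have hstep : Rel F u u2 := ⟨diffOne_flip i u, hu, hu2F⟩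
    by_cases h : u2 = v
    · exact Relation.ReflTransGen.single (h ▸ hstep)
    · have hsame2 : ∀ j, j ∉ t → u2 j = v j := by
        intro j hj
        by_cases hji : j = i
        · subst hji; exact hu2i
        · have hjs : j ∉ s := fun hjs => hj (Finset.mem_erase.mpr ⟨hji, hjs⟩)
          rw [hu2def, flip_apply_ne hji]
          exact hsame j hjs
      have hemp : F.filter (fun w => ∀ j, j ∉ t → u2 j = w j) = ∅ := by
        rw [Finset.eq_empty_iff_forall_notMem]
        intro w hw
        obtain ⟨hwF, hw2⟩ := Finset.mem_filter.mp hw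
        have : w ∈ F1 := by
          rw [hF1def, hFs]
          refine Finset.mem_filter.mpr ⟨Finset.mem_filter.mpr ⟨hwF, ?_⟩, ?_⟩
          · intro j hj
            have hjt : j ∉ t := fun hmem => hj (Finset.mem_of_mem_erase hmem)
            have hji : j ≠ i := fun hji => hj (hji ▸ his)
            rw [← hw2 j hjt, hu2def, flip_apply_ne hji]
          · have := hw2 i (Finset.notMem_erase i s)
            rw [hu2def, flip_apply_self] at this
            rw [← this]
            cases u i <;> simp
        rw [hF1empty] at this
        simp at this
      have htpos : 0 < t.card := by
        rcases Finset.eq_empty_or_nonempty t with he | hne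
        · exfalso
          apply h
          funext j
          exact hsame2 j (by rw [he]; exact Finset.notMem_empty j)
        · exact Finset.card_pos.mpr hne
      exact Relation.ReflTransGen.head hstep
        (ih t hts F u2 v hu2F hv hsame2 (by rw [hemp]; simpa using htpos))


/-- Two distinct vertices of the cube have at most 2 common neighbours. -/
lemma common_le {b c : Fin n → Bool} (hbc : b ≠ c) (CN : Finset (Fin n → Bool))
    (hCN : ∀ w ∈ CN, diffOne w b ∧ diffOne w c) : CN.card ≤ 2 := by
  classical
  rcases Finset.eq_empty_or_nonempty CN with he | ⟨w0, hw0⟩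
  · simp [he]
  · obtain ⟨hd0b, hd0c⟩ := hCN w0 hw0
    obtain ⟨j0, hj0⟩ := eq_flip_of_diffOne (diffOne_symm hd0b)
    obtain ⟨k0, hk0⟩ := eq_flip_of_diffOne (diffOne_symm hd0c)
    have hj0k0 : j0 ≠ k0 := by
      intro h
      apply hbc
      apply flip_injective j0
      rw [← hj0, h, ← hk0]
    have hagree : ∀ l, l ≠ j0 → l ≠ k0 → b l = c l := by
      intro l h1 h2
      have e1 : w0 l = b l := by rw [hj0, flip_apply_ne h1]
      have e2 : w0 l = c l := by rw [hk0, flip_apply_ne h2]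
      rw [← e1, e2]
    have hsub : CN ⊆ {flip j0 b, flip k0 b} := by
      intro w hw
      obtain ⟨hdb, hdc⟩ := hCN w hw
      obtain ⟨j, hj⟩ := eq_flip_of_diffOne (diffOne_symm hdb)
      obtain ⟨k, hk⟩ := eq_flip_of_diffOne (diffOne_symm hdc)
      have hjk : j ≠ k := by
        intro h
        apply hbc
        apply flip_injective j
        rw [← hj, h, ← hk]
      have hbcj : b j ≠ c j := by
        have h1 : w j = !(b j) := by rw [hj, flip_apply_self]
        have h2 : w j = c j := by rw [hk, flip_apply_ne hjk]
        intro heq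
        rw [heq] at h1
        rw [h1] at h2
        exact (Bool.not_ne_self (c j)) h2
      have hj' : j = j0 ∨ j = k0 := by
        by_contra hcon
        push_neg at hcon
        exact hbcj (hagree j hcon.1 hcon.2)
      rcases hj' with h | h
      · subst h; rw [hj]; exact Finset.mem_insert_self _ _
      · subst h
        rw [hj]
        exact Finset.mem_insert_of_mem (Finset.mem_singleton_self _)
    calc CN.card ≤ ({flip j0 b, flip k0 b} : Finset (Fin n → Bool)).card :=
          Finset.card_le_card hsub
      _ ≤ 2 := by
          apply le_trans (Finset.card_insert_le _ _)
          simp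

lemma key (hn : 2 ≤ n) (F : Finset (Fin n → Bool)) (hF : F.card ≤ 2 * n - 3)
    {x y z : Fin n → Bool} (hx : x ∉ F) (hy : y ∉ F) (hz : z ∉ F) :
    Reach F x y ∨ Reach F x z ∨ Reach F y z := by
  classical
  have hn1 : 0 < n := by omega
  set i0 : Fin n := ⟨0, hn1⟩ with hi0
  obtain ⟨tb, htb⟩ : ∃ t : Bool, (F.filter (fun w => w i0 = t)).card ≤ n - 2 := by
    have hpart : (F.filter (fun w => w i0 = true)).card +
        (F.filter (fun w => ¬ (w i0 = true))).card = F.card :=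
      Finset.card_filter_add_card_filter_not (s := F) (p := fun w => w i0 = true)
    by_cases hc : (F.filter (fun w => w i0 = true)).card ≤ n - 2
    · exact ⟨true, hc⟩
    · refine ⟨false, ?_⟩
      have hff : F.filter (fun w => w i0 = false) = F.filter (fun w => ¬ (w i0 = true)) := by
        ext w
        simp [Finset.mem_filter]
      rw [hff]
      generalize (F.filter (fun w => w i0 = true)).card = a at *
      generalize (F.filter (fun w => ¬ (w i0 = true))).card = b at *
      omega
  set K := F.filter (fun w => w i0 = tb) with hK
  set s : Finset (Fin n) := Finset.univ.erase i0 with hs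
  have hscard : s.card = n - 1 := by
    rw [hs, Finset.card_erase_of_mem (Finset.mem_univ _), Finset.card_univ, Fintype.card_fin]
  have hnots : ∀ j : Fin n, j ∉ s ↔ j = i0 := by
    intro j; simp [hs]
  set A : (Fin n → Bool) → Prop := fun u => ∃ w, w i0 = tb ∧ w ∉ F ∧ Reach F u w with hA
  have claimA : ∀ u v, u ∉ F → v ∉ F → A u → A v → Reach F u v := by
    rintro u v hu hv ⟨w1, hw1t, hw1F, hr1⟩ ⟨w2, hw2t, hw2F, hr2⟩
    have hmid : Reach F w1 w2 := by
      apply connL s F w1 w2 hw1F hw2F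
      · intro j hj; rw [(hnots j).mp hj, hw1t, hw2t]
      · have heqf : F.filter (fun w => ∀ j, j ∉ s → w1 j = w j) = K := by
          rw [hK]
          ext w
          simp only [Finset.mem_filter]
          constructor
          · rintro ⟨h1, h2⟩
            exact ⟨h1, by rw [← h2 i0 ((hnots i0).mpr rfl), hw1t]⟩
          · rintro ⟨h1, h2⟩
            exact ⟨h1, fun j hj => by rw [(hnots j).mp hj, hw1t, h2]⟩
        rw [heqf, hscard]
        omega
    exact (hr1.trans hmid).trans (reach_symm hr2)
  have claimU : ∀ u v, u ∉ F → v ∉ F → ¬ A u → ¬ A v → Reach F u v := by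
    intro u v hu hv hAu hAv
    by_contra hruv
    have hui : u i0 ≠ tb := fun h => hAu ⟨u, h, hu, Relation.ReflTransGen.refl⟩
    have hvi : v i0 ≠ tb := fun h => hAv ⟨v, h, hv, Relation.ReflTransGen.refl⟩
    have huv : u ≠ v := fun h => hruv (h ▸ Relation.ReflTransGen.refl)
    set B := Finset.univ.filter (fun w => Reach F u w) with hB
    set C := Finset.univ.filter (fun w => Reach F v w) with hC
    have huB : u ∈ B := Finset.mem_filter.mpr ⟨Finset.mem_univ _, Relation.ReflTransGen.refl⟩
    have hvC : v ∈ C := Finset.mem_filter.mpr ⟨Finset.mem_univ _, Relation.ReflTransGen.refl⟩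
    have hBprop : ∀ w ∈ B, Reach F u w := fun w hw => (Finset.mem_filter.mp hw).2
    have hCprop : ∀ w ∈ C, Reach F v w := fun w hw => (Finset.mem_filter.mp hw).2
    have hBF : ∀ w ∈ B, w ∉ F := fun w hw => not_mem_of_reach (hBprop w hw) hu
    have hCF : ∀ w ∈ C, w ∉ F := fun w hw => not_mem_of_reach (hCprop w hw) hv
    have hBi : ∀ w ∈ B, w i0 ≠ tb := fun w hw h => hAu ⟨w, h, hBF w hw, hBprop w hw⟩
    have hCi : ∀ w ∈ C, w i0 ≠ tb := fun w hw h => hAv ⟨w, h, hCF w hw, hCprop w hw⟩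
    have hdisj : Disjoint B C := by
      rw [Finset.disjoint_left]
      intro w hwB hwC
      exact hruv ((hBprop w hwB).trans (reach_symm (hCprop w hwC)))
    have hflipval : ∀ w : Fin n → Bool, w i0 ≠ tb → (flip i0 w) i0 = tb := by
      intro w h
      rw [flip_apply_self]
      revert h
      cases w i0 <;> cases tb <;> simp
    have hBimg : B.image (flip i0) ⊆ K := by
      rw [hK]
      intro w2 hw2
      obtain ⟨w, hwB, rfl⟩ := Finset.mem_image.mp hw2
      have hwt : (flip i0 w) i0 = tb := hflipval w (hBi w hwB)
      refine Finset.mem_filter.mpr ⟨?_, hwt⟩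
      by_contra hnF
      exact hAu ⟨flip i0 w, hwt, hnF,
        (hBprop w hwB).tail ⟨diffOne_flip i0 w, hBF w hwB, hnF⟩⟩
    have hCimg : C.image (flip i0) ⊆ K := by
      rw [hK]
      intro w2 hw2
      obtain ⟨w, hwC, rfl⟩ := Finset.mem_image.mp hw2
      have hwt : (flip i0 w) i0 = tb := hflipval w (hCi w hwC)
      refine Finset.mem_filter.mpr ⟨?_, hwt⟩
      by_contra hnF
      exact hAv ⟨flip i0 w, hwt, hnF,
        (hCprop w hwC).tail ⟨diffOne_flip i0 w, hCF w hwC, hnF⟩⟩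
    have himgdisj : Disjoint (B.image (flip i0)) (C.image (flip i0)) := by
      rw [Finset.disjoint_left]
      intro a haB haC
      obtain ⟨w, hw, rfl⟩ := Finset.mem_image.mp haB
      obtain ⟨w', hw', he⟩ := Finset.mem_image.mp haC
      have : w' = w := flip_injective i0 he
      subst this
      exact (Finset.disjoint_left.mp hdisj hw) hw'
    have hcross : B.card + C.card ≤ K.card := by
      have h1 : (B.image (flip i0) ∪ C.image (flip i0)).card = B.card + C.card := by
        rw [Finset.card_union_of_disjoint himgdisj,
          Finset.card_image_of_injective _ (flip_injective i0),
          Finset.card_image_of_injective _ (flip_injective i0)]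
      rw [← h1]
      exact Finset.card_le_card (Finset.union_subset hBimg hCimg)
    set F2 := F.filter (fun w => ¬ (w i0 = tb)) with hF2
    set Xu := s.image (fun j => flip j u) ∩ F2 with hXu
    set Xv := s.image (fun j => flip j v) ∩ F2 with hXv
    have hinjU : Function.Injective (fun j => flip j u) := fun j k h => flip_left_injective u h
    have hinjV : Function.Injective (fun j => flip j v) := fun j k h => flip_left_injective v h
    have himgU : s.image (fun j => flip j u) ⊆ Xu ∪ B.erase u := by
      intro w hw
      obtain ⟨j, hjs, rfl⟩ := Finset.mem_image.mp hw
      have hji0 : j ≠ i0 := (Finset.mem_erase.mp (hs ▸ hjs)).1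
      by_cases hwF : flip j u ∈ F
      · apply Finset.mem_union_left
        refine Finset.mem_inter.mpr ⟨hw, Finset.mem_filter.mpr ⟨hwF, ?_⟩⟩
        rw [flip_apply_ne (Ne.symm hji0)]
        exact hui
      · apply Finset.mem_union_right
        exact Finset.mem_erase.mpr ⟨flip_ne j u, Finset.mem_filter.mpr
          ⟨Finset.mem_univ _, Relation.ReflTransGen.single ⟨diffOne_flip j u, hu, hwF⟩⟩⟩
    have himgV : s.image (fun j => flip j v) ⊆ Xv ∪ C.erase v := by
      intro w hw
      obtain ⟨j, hjs, rfl⟩ := Finset.mem_image.mp hw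
      have hji0 : j ≠ i0 := (Finset.mem_erase.mp (hs ▸ hjs)).1
      by_cases hwF : flip j v ∈ F
      · apply Finset.mem_union_left
        refine Finset.mem_inter.mpr ⟨hw, Finset.mem_filter.mpr ⟨hwF, ?_⟩⟩
        rw [flip_apply_ne (Ne.symm hji0)]
        exact hvi
      · apply Finset.mem_union_right
        exact Finset.mem_erase.mpr ⟨flip_ne j v, Finset.mem_filter.mpr
          ⟨Finset.mem_univ _, Relation.ReflTransGen.single ⟨diffOne_flip j v, hv, hwF⟩⟩⟩
    have hcardU : n - 1 ≤ Xu.card + (B.card - 1) := by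
      have h1 : (s.image (fun j => flip j u)).card = n - 1 := by
        rw [Finset.card_image_of_injective _ hinjU, hscard]
      have h2 := Finset.card_le_card himgU
      have h3 := Finset.card_union_le Xu (B.erase u)
      have h4 : (B.erase u).card = B.card - 1 := Finset.card_erase_of_mem huB
      calc n - 1 = (s.image (fun j => flip j u)).card := h1.symm
        _ ≤ (Xu ∪ B.erase u).card := h2
        _ ≤ Xu.card + (B.erase u).card := h3
        _ = Xu.card + (B.card - 1) := by rw [h4]
    have hcardV : n - 1 ≤ Xv.card + (C.card - 1) := by
      have h1 : (s.image (fun j => flip j v)).card = n - 1 := by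
        rw [Finset.card_image_of_injective _ hinjV, hscard]
      have h2 := Finset.card_le_card himgV
      have h3 := Finset.card_union_le Xv (C.erase v)
      have h4 : (C.erase v).card = C.card - 1 := Finset.card_erase_of_mem hvC
      calc n - 1 = (s.image (fun j => flip j v)).card := h1.symm
        _ ≤ (Xv ∪ C.erase v).card := h2
        _ ≤ Xv.card + (C.erase v).card := h3
        _ = Xv.card + (C.card - 1) := by rw [h4]
    have hcap : (Xu ∩ Xv).card ≤ 2 := by
      refine common_le huv (Xu ∩ Xv) ?_
      intro w hw
      obtain ⟨hw1, hw2⟩ := Finset.mem_inter.mp hw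
      obtain ⟨j, hjmem, hj⟩ := Finset.mem_image.mp (Finset.mem_inter.mp hw1).1
      obtain ⟨k, hkmem, hk⟩ := Finset.mem_image.mp (Finset.mem_inter.mp hw2).1
      constructor
      · rw [← hj]; exact diffOne_symm (diffOne_flip j u)
      · rw [← hk]; exact diffOne_symm (diffOne_flip k v)
    have hXF2 : Xu ∪ Xv ⊆ F2 :=
      Finset.union_subset Finset.inter_subset_right Finset.inter_subset_right
    have hXsum : Xu.card + Xv.card ≤ F2.card + 2 := by
      have h1 := Finset.card_union_add_card_inter Xu Xv
      have h2 := Finset.card_le_card hXF2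
      omega
    have hpart : K.card + F2.card = F.card := by
      rw [hF2, hK]
      exact Finset.card_filter_add_card_filter_not (s := F) (p := fun w => w i0 = tb)
    have hB1 : 1 ≤ B.card := Finset.card_pos.mpr ⟨u, huB⟩
    have hC1 : 1 ≤ C.card := Finset.card_pos.mpr ⟨v, hvC⟩
    omega
  by_cases hax : A x <;> by_cases hay : A y <;> by_cases haz : A z
  · exact Or.inl (claimA x y hx hy hax hay)
  · exact Or.inl (claimA x y hx hy hax hay)
  · exact Or.inr (Or.inl (claimA x z hx hz hax haz))
  · exact Or.inr (Or.inr (claimU y z hy hz hay haz))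
  · exact Or.inr (Or.inr (claimA y z hy hz hay haz))
  · exact Or.inr (Or.inl (claimU x z hx hz hax haz))
  · exact Or.inl (claimU x y hx hy hax hay)
  · exact Or.inl (claimU x y hx hy hax hay)

end CubeFault


theorem cube_vertex_fault (n : ℕ) (hn : 2 ≤ n)
    (F : Finset (Fin n → Bool)) (hF : F.card ≤ 2 * n - 3) :
    Nat.card ((cubeGraph n).induce ((↑F)ᶜ : Set (Fin n → Bool))).ConnectedComponent ≤ 2 := by
  classical
  have hreach : ∀ (a b : Fin n → Bool), CubeFault.Reach F a b →
      ∀ (ha : a ∈ ((↑F)ᶜ : Set (Fin n → Bool))) (hb : b ∈ ((↑F)ᶜ : Set (Fin n → Bool))),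
        ((cubeGraph n).induce ((↑F)ᶜ : Set (Fin n → Bool))).Reachable ⟨a, ha⟩ ⟨b, hb⟩ := by
    intro a b hra
    induction hra with
    | refl => intro ha hb; exact Reachable.refl _
    | @tail b c h1 h2 ih =>
      intro ha hc
      have hbF : b ∉ F := h2.2.1
      have hb : b ∈ ((↑F)ᶜ : Set (Fin n → Bool)) := by simpa using hbF
      refine (ih ha hb).trans (Adj.reachable ?_)
      have hne : b ≠ c := CubeFault.ne_of_diffOne h2.1
      show (cubeGraph n).Adj b c
      exact ⟨hne, Or.inl h2.1⟩
  rcases isEmpty_or_nonempty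
      (((cubeGraph n).induce ((↑F)ᶜ : Set (Fin n → Bool))).ConnectedComponent) with hE | hN
  · rw [Nat.card_of_isEmpty]; omega
  obtain ⟨c1⟩ := hN
  have hmemF : ∀ w : ((↑F)ᶜ : Set (Fin n → Bool)), (w : Fin n → Bool) ∉ F := by
    intro w
    have h2 : (w : Fin n → Bool) ∈ ((↑F)ᶜ : Set (Fin n → Bool)) := w.2
    rw [Set.mem_compl_iff, Finset.mem_coe] at h2
    exact h2
  have hinj : Function.Injective
      (fun c : ((cubeGraph n).induce ((↑F)ᶜ : Set (Fin n → Bool))).ConnectedComponent =>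
        if c = c1 then true else false) := by
    intro d e hde
    by_cases hd : d = c1 <;> by_cases he : e = c1
    · rw [hd, he]
    · simp only [if_pos hd, if_neg he] at hde
      exact absurd hde (by simp)
    · simp only [if_neg hd, if_pos he] at hde
      exact absurd hde (by simp)
    · obtain ⟨xd, hxd⟩ := d.exists_rep
      obtain ⟨xe, hxe⟩ := e.exists_rep
      obtain ⟨x1, hx1⟩ := c1.exists_rep
      rcases CubeFault.key hn F hF (hmemF xd) (hmemF xe) (hmemF x1) with h | h | h
      · rw [← hxd, ← hxe]
        exact Quot.sound (hreach _ _ h xd.2 xe.2)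
      · exfalso; apply hd; rw [← hxd, ← hx1]
        exact Quot.sound (hreach _ _ h xd.2 x1.2)
      · exfalso; apply he; rw [← hxe, ← hx1]
        exact Quot.sound (hreach _ _ h xe.2 x1.2)
  have hle := Nat.card_le_card_of_injective _ hinj
  have hb2 : Nat.card Bool = 2 := by simp [Nat.card_eq_fintype_card]
  rw [hb2] at hle
  exact hle
end

section
/- Let n ≥ 2 and let H be a connected n-regular finite simple graph with 2^n vertices, exactly 2^{n−2}·(n choose 2) subgraphs isomorphic to the cycle C_4 (i.e., exactly 2^{n−2}·(n choose 2) unordered 4-cycles: sets of four distinct vertices a, b, c, d admitting an ordering with ab, bc, cd, da all edges, each cycle counted once up to rotation and reflection), and no subgraph isomorphic to K_{2,3} (i.e., there do not exist distinct vertices u_1, u_2, w_1, w_2, w_3 with every u_i adjacent to every w_j). Then H is isomorphic to the n-cube Q^n. -/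
open SimpleGraph

/-- The number of (unordered) 4-cycles in `H`, each counted once up to rotation and
reflection: a 4-cycle is recorded by its set of four edges
`{ab, bc, cd, da}` where `a, b, c, d` are four distinct vertices with
`ab, bc, cd, da` all edges of `H`. -/
noncomputable def numCycles4 {V : Type*} [DecidableEq V] (H : SimpleGraph V) : ℕ :=
  Nat.card {E : Finset (Sym2 V) // ∃ a b c d : V,
    ([a, b, c, d] : List V).Nodup ∧
    H.Adj a b ∧ H.Adj b c ∧ H.Adj c d ∧ H.Adj d a ∧
    E = {s(a, b), s(b, c), s(c, d), s(d, a)}}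

open Finset
set_option linter.unusedSectionVars false
set_option linter.unusedVariables false

namespace CubeChar

variable {V : Type*} [Fintype V] [DecidableEq V] {H : SimpleGraph V} [DecidableRel H.Adj]

/-- no two vertices have three common neighbours -/
def K23Free (H : SimpleGraph V) : Prop := ∀ ⦃x y a b c : V⦄, x ≠ y → a ≠ b → a ≠ c → b ≠ c →
  H.Adj x a → H.Adj x b → H.Adj x c → H.Adj y a → H.Adj y b → H.Adj y c → False

/-- every path of length two extends to a 4-cycle -/
def FourProp (H : SimpleGraph V) : Prop := ∀ ⦃v x y : V⦄, H.Adj v x → H.Adj v y → x ≠ y →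
  ∃ u, u ≠ v ∧ H.Adj x u ∧ H.Adj y u

lemma dist_adj (h : H.Adj x y) : H.dist x y = 1 := dist_eq_one_iff_adj.mpr h

lemma adj_dist_le (hconn : H.Connected) {w x y : V} (h : H.Adj x y) :
    H.dist w y ≤ H.dist w x + 1 := by
  have := hconn.dist_triangle (u := w) (v := x) (w := y)
  rwa [dist_adj h] at this

lemma exists_penult (hconn : H.Connected) {w x : V} {k : ℕ} (h : H.dist w x = k + 1) :
    ∃ y, H.Adj y x ∧ H.dist w y = k := by
  obtain ⟨p, hp⟩ := hconn.exists_walk_length_eq_dist w x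
  rw [h] at hp
  cases hq : p.reverse with
  | nil =>
      exfalso
      have := congrArg SimpleGraph.Walk.length hq
      rw [SimpleGraph.Walk.length_reverse, hp] at this
      simp at this
  | cons ha q =>
      rename_i y
      refine ⟨y, ha.symm, ?_⟩
      have hlq : q.length = k := by
        have := congrArg SimpleGraph.Walk.length hq
        rw [SimpleGraph.Walk.length_reverse, hp] at this
        simpa using this.symm
      have h1 : H.dist w y ≤ k := by
        have := SimpleGraph.dist_le q.reverse
        rwa [SimpleGraph.Walk.length_reverse, hlq] at this
      have h2 : k ≤ H.dist w y := by
        have := adj_dist_le hconn (w := w) ha.symm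
        omega
      omega


/-- neighbours of `x` whose distance from `w` is one less than that of `x`. -/
noncomputable def downF (H : SimpleGraph V) [DecidableRel H.Adj] (w x : V) : Finset V :=
  (H.neighborFinset x).filter (fun y => H.dist w y + 1 = H.dist w x)

lemma mem_downF {w x y : V} :
    y ∈ downF H w x ↔ H.Adj x y ∧ H.dist w y + 1 = H.dist w x := by
  simp [downF, mem_filter, mem_neighborFinset]

lemma down_card_ge (hconn : H.Connected) (hK : K23Free H) (hF : FourProp H) (w : V) :
    ∀ k x, H.dist w x = k → k ≤ (downF H w x).card := by
  intro k
  induction k using Nat.strong_induction_on with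
  | _ k IH =>
    intro x hx
    match k, hx with
    | 0, _ => exact Nat.zero_le _
    | (j+1), hx =>
      obtain ⟨y, hyx, hy⟩ := exists_penult hconn hx
      have hymem : y ∈ downF H w x := mem_downF.mpr ⟨hyx.symm, by omega⟩
      cases j with
      | zero =>
          have : 0 < (downF H w x).card := card_pos.mpr ⟨y, hymem⟩
          omega
      | succ i =>
        have key : ∀ z : V, ∃ u : V,
            z ∈ downF H w y → (u ∈ downF H w x ∧ u ≠ y ∧ H.Adj z u) := by
          intro z
          by_cases hz : z ∈ downF H w y
          · obtain ⟨hyz, hdz⟩ := mem_downF.mp hz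
            have hxz : x ≠ z := by
              intro h; rw [← h] at hdz; omega
            obtain ⟨u, huy, hxu, hzu⟩ := hF hyx hyz hxz
            have h1 : H.dist w u ≤ i + 1 := by
              have := adj_dist_le hconn (w := w) hzu
              omega
            have h2 : i + 1 ≤ H.dist w u := by
              have := adj_dist_le hconn (w := w) hxu.symm
              omega
            exact ⟨u, fun _ => ⟨mem_downF.mpr ⟨hxu, by omega⟩, huy, hzu⟩⟩
          · exact ⟨z, fun h => absurd h hz⟩
        choose f hf using key
        have hmaps : ∀ z ∈ downF H w y, f z ∈ (downF H w x).erase y := by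
          intro z hz
          obtain ⟨hm, hne, _⟩ := hf z hz
          exact Finset.mem_erase.mpr ⟨hne, hm⟩
        have hinj : Set.InjOn f (downF H w y) := by
          intro z hz z' hz' heq
          by_contra hne
          obtain ⟨hm, _, hzu⟩ := hf z (by simpa using hz)
          obtain ⟨hm', huy, hzu'⟩ := hf z' (by simpa using hz')
          rw [heq] at hzu
          obtain ⟨hyz, hdz⟩ := mem_downF.mp (by simpa using hz : z ∈ downF H w y)
          obtain ⟨hyz', hdz'⟩ := mem_downF.mp (by simpa using hz' : z' ∈ downF H w y)
          obtain ⟨hxu, hdu⟩ := mem_downF.mp hm'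
          exact hK (Ne.symm huy) (by intro h; rw [← h] at hdz; omega)
            (by intro h; rw [← h] at hdz'; omega) hne hyx hyz hyz'
            hxu.symm hzu.symm hzu'.symm
        have hcard := Finset.card_le_card_of_injOn f hmaps hinj
        have hIH := IH (i + 1) (by omega) y hy
        have herase := Finset.card_erase_of_mem hymem
        omega


/-- vertices at distance `k` from `w` -/
noncomputable def lvlF (H : SimpleGraph V) [DecidableRel H.Adj] (w : V) (k : ℕ) : Finset V :=
  univ.filter (fun x => H.dist w x = k)

/-- number of neighbours of `x` at distance `j` from `w` -/
noncomputable def cnt (H : SimpleGraph V) [DecidableRel H.Adj] (w x : V) (j : ℕ) : ℕ :=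
  ((H.neighborFinset x).filter (fun y => H.dist w y = j)).card

lemma mem_lvlF {w x : V} {k : ℕ} : x ∈ lvlF H w k ↔ H.dist w x = k := by
  simp [lvlF]

lemma cnt_eq_sum (w x : V) (j : ℕ) :
    cnt H w x j = ∑ y : V, if H.Adj x y ∧ H.dist w y = j then 1 else 0 := by
  rw [cnt, neighborFinset_eq_filter, filter_filter, card_filter]

lemma sum_cnt_swap (w : V) (k j : ℕ) :
    ∑ x ∈ lvlF H w k, cnt H w x j = ∑ y ∈ lvlF H w j, cnt H w y k := by
  have key : ∀ (a b : ℕ),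
      ∑ x ∈ lvlF H w a, cnt H w x b
        = ∑ x ∈ lvlF H w a, ∑ y ∈ lvlF H w b, if H.Adj x y then 1 else 0 := by
    intro a b
    refine Finset.sum_congr rfl fun x _ => ?_
    rw [cnt_eq_sum, lvlF, Finset.sum_filter]
    refine Finset.sum_congr rfl fun y _ => ?_
    by_cases h1 : H.dist w y = b <;> by_cases h2 : H.Adj x y <;> simp [h1, h2]
  rw [key, key, Finset.sum_comm]
  refine Finset.sum_congr rfl fun y _ => Finset.sum_congr rfl fun x _ => ?_
  by_cases h : H.Adj x y <;> simp [h, adj_comm]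

lemma downF_eq_filter {w x : V} {k : ℕ} (hk : 1 ≤ k) (hx : H.dist w x = k) :
    downF H w x = (H.neighborFinset x).filter (fun y => H.dist w y = k - 1) := by
  rw [downF]
  refine Finset.filter_congr fun y _ => ?_
  constructor
  · intro h; omega
  · intro h; omega

lemma cnt_down_ge (hconn : H.Connected) (hK : K23Free H) (hF : FourProp H)
    {w x : V} {k : ℕ} (hk : 1 ≤ k) (hx : H.dist w x = k) : k ≤ cnt H w x (k - 1) := by
  have := down_card_ge hconn hK hF w k x hx
  rwa [downF_eq_filter hk hx] at this

section Reg
variable {n : ℕ} (hconn : H.Connected) (hK : K23Free H) (hF : FourProp H)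
  (hreg : H.IsRegularOfDegree n)

include hconn hK hF hreg

lemma dist_le_n (w x : V) : H.dist w x ≤ n := by
  have h1 := down_card_ge hconn hK hF w (H.dist w x) x rfl
  have h2 : (downF H w x).card ≤ n := by
    rw [downF]
    calc (Finset.filter _ (H.neighborFinset x)).card ≤ (H.neighborFinset x).card :=
      Finset.card_le_card (Finset.filter_subset _ (H.neighborFinset x))
    _ = n := hreg x
  omega

lemma cnt_up_le (w : V) {y : V} {k : ℕ} (hy : H.dist w y = k) :
    cnt H w y (k + 1) + k ≤ n := by
  have hdown := down_card_ge hconn hK hF w k y hy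
  have hdisj : Disjoint (downF H w y) ((H.neighborFinset y).filter (fun z => H.dist w z = k + 1)) := by
    refine Finset.disjoint_left.mpr fun z hz1 hz2 => ?_
    have h1 := (mem_downF.mp hz1).2
    have h2 := (Finset.mem_filter.mp hz2).2
    omega
  have hsub : downF H w y ∪ (H.neighborFinset y).filter (fun z => H.dist w z = k + 1)
      ⊆ H.neighborFinset y := by
    refine Finset.union_subset ?_ (Finset.filter_subset _ _)
    rw [downF]; exact Finset.filter_subset _ _
  have hle := Finset.card_le_card hsub
  rw [Finset.card_union_of_disjoint hdisj] at hle
  have hdeg : (H.neighborFinset y).card = n := hreg y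
  have hcnt : cnt H w y (k+1)
      = ((H.neighborFinset y).filter (fun z => H.dist w z = k + 1)).card := rfl
  omega

lemma lvl_card_le (w : V) : ∀ k, (lvlF H w k).card ≤ n.choose k := by
  intro k
  induction k with
  | zero =>
      rw [Nat.choose_zero_right]
      refine Finset.card_le_one.mpr fun a ha b hb => ?_
      have h1 : w = a := (hconn.dist_eq_zero_iff).mp (mem_lvlF.mp ha)
      have h2 : w = b := (hconn.dist_eq_zero_iff).mp (mem_lvlF.mp hb)
      rw [← h1, ← h2]
  | succ k IH =>
      have low : (lvlF H w (k+1)).card * (k+1) ≤ ∑ x ∈ lvlF H w (k+1), cnt H w x k := by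
        have := Finset.card_nsmul_le_sum (lvlF H w (k+1)) (fun x => cnt H w x k) (k+1)
          (fun x hx => by
            have := cnt_down_ge hconn hK hF (by omega : 1 ≤ k+1) (mem_lvlF.mp hx)
            simpa using this)
        simpa [smul_eq_mul] using this
      have up : ∑ y ∈ lvlF H w k, cnt H w y (k+1) ≤ (lvlF H w k).card * (n - k) := by
        have := Finset.sum_le_card_nsmul (lvlF H w k) (fun y => cnt H w y (k+1)) (n - k)
          (fun y hy => by
            show cnt H w y (k+1) ≤ n - k
            have := cnt_up_le hconn hK hF hreg w (mem_lvlF.mp hy)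
            omega)
        simpa [smul_eq_mul] using this
      rw [sum_cnt_swap] at low
      have hchain : (lvlF H w (k+1)).card * (k+1) ≤ n.choose k * (n - k) :=
        le_trans low (le_trans up (Nat.mul_le_mul_right _ IH))
      rw [← Nat.choose_succ_right_eq] at hchain
      exact Nat.le_of_mul_le_mul_right hchain (by omega)


lemma sum_lvl_card (w : V) :
    ∑ k ∈ Finset.range (n+1), (lvlF H w k).card = Fintype.card V := by
  rw [← Finset.card_univ]
  simp only [lvlF]
  exact (Finset.card_eq_sum_card_fiberwise (fun x _ =>
    Finset.mem_range.mpr (Nat.lt_succ_of_le (dist_le_n hconn hK hF hreg w x)))).symm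

lemma lvl_card_eq (hcard : Fintype.card V = 2 ^ n) (w : V) {k : ℕ} (hk : k ≤ n) :
    (lvlF H w k).card = n.choose k := by
  have hsum := sum_lvl_card hconn hK hF hreg (w := w)
  rw [hcard, ← Nat.sum_range_choose] at hsum
  exact (Finset.sum_eq_sum_iff_of_le
    (fun i _ => lvl_card_le hconn hK hF hreg w i)).mp hsum k (Finset.mem_range.mpr (by omega))

lemma cnt_exact (hcard : Fintype.card V = 2 ^ n) (w : V) {k : ℕ} (hk1 : 1 ≤ k) (hk2 : k ≤ n) :
    (∀ x ∈ lvlF H w k, cnt H w x (k-1) = k) ∧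
    (∀ y ∈ lvlF H w (k-1), cnt H w y k = n - k + 1) := by
  have hL1 : (lvlF H w k).card = n.choose k := lvl_card_eq hconn hK hF hreg hcard w hk2
  have hL0 : (lvlF H w (k-1)).card = n.choose (k-1) :=
    lvl_card_eq hconn hK hF hreg hcard w (by omega)
  have low : ∀ x ∈ lvlF H w k, k ≤ cnt H w x (k-1) := fun x hx =>
    cnt_down_ge hconn hK hF hk1 (mem_lvlF.mp hx)
  have up : ∀ y ∈ lvlF H w (k-1), cnt H w y k ≤ n - k + 1 := by
    intro y hy
    have h0 := cnt_up_le hconn hK hF hreg w (mem_lvlF.mp hy)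
    rw [Nat.sub_add_cancel hk1] at h0
    omega
  have hswap := sum_cnt_swap (H := H) w k (k-1)
  have hlow : n.choose k * k ≤ ∑ x ∈ lvlF H w k, cnt H w x (k-1) := by
    have := Finset.card_nsmul_le_sum (lvlF H w k) (fun x => cnt H w x (k-1)) k low
    rw [hL1, smul_eq_mul] at this
    exact this
  have hup : ∑ y ∈ lvlF H w (k-1), cnt H w y k ≤ n.choose (k-1) * (n - k + 1) := by
    have := Finset.sum_le_card_nsmul (lvlF H w (k-1)) (fun y => cnt H w y k) (n - k + 1) up
    rw [hL0, smul_eq_mul] at this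
    exact this
  have hid : n.choose (k-1) * (n - k + 1) = n.choose k * k := by
    have h3 := Nat.choose_succ_right_eq n (k-1)
    rw [Nat.sub_add_cancel hk1] at h3
    have h4 : n - (k-1) = n - k + 1 := by omega
    rw [h4] at h3
    omega
  have hS1 : ∑ x ∈ lvlF H w k, cnt H w x (k-1) = n.choose k * k :=
    le_antisymm (by rw [hswap]; exact hid ▸ hup) hlow
  have hS2 : ∑ y ∈ lvlF H w (k-1), cnt H w y k = n.choose (k-1) * (n - k + 1) :=
    le_antisymm hup (by rw [← hswap]; exact hid.symm ▸ hlow)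
  constructor
  · intro x hx
    have heq : ∑ x ∈ lvlF H w k, (k : ℕ) = ∑ x ∈ lvlF H w k, cnt H w x (k-1) := by
      rw [hS1, Finset.sum_const, hL1, smul_eq_mul, Nat.mul_comm]
    exact ((Finset.sum_eq_sum_iff_of_le low).mp heq x hx).symm
  · intro y hy
    have heq : ∑ y ∈ lvlF H w (k-1), cnt H w y k = ∑ y ∈ lvlF H w (k-1), (n - k + 1) := by
      rw [hS2, Finset.sum_const, hL0, smul_eq_mul]
    exact (Finset.sum_eq_sum_iff_of_le up).mp heq y hy

lemma no_horiz (hcard : Fintype.card V = 2 ^ n) (w : V) {x y : V} (h : H.Adj x y) :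
    H.dist w x ≠ H.dist w y := by
  intro heq
  set j := H.dist w x with hj
  rcases Nat.eq_zero_or_pos j with hj0 | hjpos
  · have hd0 : H.dist w x = 0 := by omega
    have hwx : w = x := hconn.dist_eq_zero_iff.mp hd0
    have h1 : H.dist w y = 1 := dist_adj (hwx ▸ h)
    omega
  · have hjn : j ≤ n := dist_le_n hconn hK hF hreg w x
    rcases lt_or_eq_of_le hjn with hjlt | hjeq
    · have hdn := (cnt_exact hconn hK hF hreg hcard w hjpos hjn).1 x (mem_lvlF.mpr rfl)
      have hupx : cnt H w x (j+1) = n - j := by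
        have := (cnt_exact hconn hK hF hreg hcard w (by omega : 1 ≤ j+1)
          (by omega : j+1 ≤ n)).2 x (mem_lvlF.mpr (by simp [hj]))
        omega
      set A := (H.neighborFinset x).filter (fun z => H.dist w z = j-1) with hA
      set B := (H.neighborFinset x).filter (fun z => H.dist w z = j+1) with hB
      have hdisj : Disjoint A B := by
        refine Finset.disjoint_left.mpr fun z hz1 hz2 => ?_
        have h1 := (Finset.mem_filter.mp hz1).2
        have h2 := (Finset.mem_filter.mp hz2).2
        omega
      have hsub : A ∪ B ⊆ H.neighborFinset x := by
        exact Finset.union_subset (Finset.filter_subset _ _) (Finset.filter_subset _ _)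
      have hcards : (A ∪ B).card = n := by
        rw [Finset.card_union_of_disjoint hdisj]
        have hAc : A.card = j := hdn
        have hBc : B.card = n - j := hupx
        omega
      have hEq : A ∪ B = H.neighborFinset x := by
        refine Finset.eq_of_subset_of_card_le hsub ?_
        rw [hcards]
        exact le_of_eq (hreg x)
      have hy : y ∈ A ∪ B := by
        rw [hEq]
        exact (H.mem_neighborFinset x y).mpr h
      rcases Finset.mem_union.mp hy with hz | hz
      · have := (Finset.mem_filter.mp hz).2; omega
      · have := (Finset.mem_filter.mp hz).2; omega
    · have hdn := (cnt_exact hconn hK hF hreg hcard w hjpos hjn).1 x (mem_lvlF.mpr rfl)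
      set A := (H.neighborFinset x).filter (fun z => H.dist w z = j-1) with hA
      have hEq : A = H.neighborFinset x := by
        refine Finset.eq_of_subset_of_card_le (Finset.filter_subset _ _) ?_
        have hAc : A.card = j := hdn
        rw [hAc]
        rw [hjeq] at *
        exact le_of_eq (hreg x)
      have hy : y ∈ A := by rw [hEq]; exact (H.mem_neighborFinset x y).mpr h
      have := (Finset.mem_filter.mp hy).2
      omega

lemma dist_dichot (hcard : Fintype.card V = 2 ^ n) {w u x : V} (hwu : H.Adj w u) {k : ℕ}
    (hx : H.dist w x = k) : H.dist u x + 1 = k ∨ H.dist u x = k + 1 := by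
  have h1 : H.dist u x ≤ k + 1 := by
    have := hconn.dist_triangle (u := u) (v := w) (w := x)
    rw [dist_adj hwu.symm, hx] at this
    omega
  have h2 : k ≤ H.dist u x + 1 := by
    have := hconn.dist_triangle (u := w) (v := u) (w := x)
    rw [dist_adj hwu, hx] at this
    omega
  have h3 : H.dist u x ≠ k := by
    have := no_horiz hconn hK hF hreg hcard x hwu
    rw [SimpleGraph.dist_comm (u := x) (v := w), SimpleGraph.dist_comm (u := x) (v := u), hx] at this
    omega
  omega

end Reg

/-- trace of `x` on the neighbours of `w`: those neighbours strictly closer to `x` -/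
noncomputable def psi (H : SimpleGraph V) [DecidableRel H.Adj] (w x : V) : Finset V :=
  (H.neighborFinset w).filter (fun u => H.dist u x < H.dist w x)

lemma mem_psi {w x u : V} :
    u ∈ psi H w x ↔ H.Adj w u ∧ H.dist u x < H.dist w x := by
  simp [psi, mem_neighborFinset]

noncomputable def tcnt (H : SimpleGraph V) [DecidableRel H.Adj] (w u : V) (k : ℕ) : ℕ :=
  ((lvlF H w k).filter (fun x => H.dist u x + 1 = k)).card

lemma filter_partition {s : Finset V} {p q : V → Prop} [DecidablePred p] [DecidablePred q]
    (h : ∀ x ∈ s, p x ∨ q x) (hd : ∀ x ∈ s, ¬(p x ∧ q x)) :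
    (s.filter p).card + (s.filter q).card = s.card := by
  rw [← Finset.card_union_of_disjoint (Finset.disjoint_left.mpr fun a ha hb =>
    hd a (Finset.mem_filter.mp ha).1 ⟨(Finset.mem_filter.mp ha).2, (Finset.mem_filter.mp hb).2⟩)]
  rw [← Finset.filter_or]
  rw [Finset.filter_true_of_mem h]

lemma sum_card_filter_swap (s t : Finset V) (P : V → V → Prop) [∀ u x, Decidable (P u x)] :
    ∑ x ∈ s, (t.filter (fun u => P u x)).card = ∑ u ∈ t, (s.filter (fun x => P u x)).card := by
  simp only [Finset.card_filter]
  exact Finset.sum_comm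

section Reg2
variable {n : ℕ} (hconn : H.Connected) (hK : K23Free H) (hF : FourProp H)
  (hreg : H.IsRegularOfDegree n) (hcard : Fintype.card V = 2 ^ n)

include hconn hK hF hreg hcard

lemma tcnt_rec {w u : V} (hwu : H.Adj w u) {k : ℕ} (hk2 : k + 2 ≤ n) :
    tcnt H w u (k+2) + (lvlF H w k).card = n.choose (k+1) + tcnt H w u k := by
  have eq1 : ((lvlF H u (k+1)).filter (fun x => H.dist w x = k+2)).card
      + ((lvlF H u (k+1)).filter (fun x => H.dist w x = k)).card
      = (lvlF H u (k+1)).card := by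
    refine filter_partition (fun x hx => ?_) (fun x hx => by omega)
    have hdx := mem_lvlF.mp hx
    rcases dist_dichot hconn hK hF hreg hcard hwu.symm hdx with h | h
    · right; omega
    · left; omega
  have eq1' : ((lvlF H u (k+1)).filter (fun x => H.dist w x = k+2)).card
      = tcnt H w u (k+2) := by
    congr 1
    ext x
    simp only [Finset.mem_filter, mem_lvlF, tcnt]
    constructor
    · rintro ⟨h1, h2⟩; exact ⟨h2, by omega⟩
    · rintro ⟨h1, h2⟩; exact ⟨by omega, h1⟩
  have eq2 : ((lvlF H w k).filter (fun x => H.dist u x = k+1)).card + tcnt H w u k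
      = (lvlF H w k).card := by
    refine filter_partition (fun x hx => ?_) (fun x hx => by omega)
    have hdx := mem_lvlF.mp hx
    rcases dist_dichot hconn hK hF hreg hcard hwu hdx with h | h
    · right; omega
    · left; omega
  have bridge : ((lvlF H u (k+1)).filter (fun x => H.dist w x = k)).card
      = ((lvlF H w k).filter (fun x => H.dist u x = k+1)).card := by
    congr 1
    ext x
    simp only [Finset.mem_filter, mem_lvlF]
    omega
  have hlvl : (lvlF H u (k+1)).card = n.choose (k+1) :=
    lvl_card_eq hconn hK hF hreg hcard u (by omega)
  simp only [tcnt] at eq1' eq2 ⊢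
  omega

lemma tcnt_eq {w u : V} (hwu : H.Adj w u) (hn : 1 ≤ n) :
    ∀ k, 1 ≤ k → k ≤ n → tcnt H w u k = (n-1).choose (k-1) := by
  intro k
  induction k using Nat.strong_induction_on with
  | _ k IH =>
    match k with
    | 0 => omega
    | 1 =>
      intro _ _
      have : (lvlF H w 1).filter (fun x => H.dist u x + 1 = 1) = {u} := by
        ext x
        simp only [Finset.mem_filter, mem_lvlF, Finset.mem_singleton]
        constructor
        · rintro ⟨h1, h2⟩
          have : H.dist u x = 0 := by omega
          exact (hconn.dist_eq_zero_iff.mp this).symm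
        · rintro rfl
          exact ⟨dist_adj hwu, by rw [SimpleGraph.dist_self]⟩
      rw [tcnt, this]
      simp
    | 2 =>
      intro _ h2n
      have hrec := tcnt_rec hconn hK hF hreg hcard hwu (k := 0) h2n
      norm_num at hrec
      have h0 : tcnt H w u 0 = 0 := by
        rw [tcnt]
        rw [Finset.card_eq_zero]
        refine Finset.filter_false_of_mem fun x _ => by omega
      have hl0 : (lvlF H w 0).card = n.choose 0 :=
        lvl_card_eq hconn hK hF hreg hcard w (by omega)
      rw [Nat.choose_zero_right] at hl0
      have hgoal : (n-1).choose (2-1) = n - 1 := by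
        rw [Nat.choose_one_right]
      omega
    | (j+3) =>
      intro _ hkn
      obtain ⟨m, rfl⟩ : ∃ m, n = m + 1 := ⟨n - 1, by omega⟩
      have hrec := tcnt_rec hconn hK hF hreg hcard hwu (k := j+1) (by omega)
      rw [show j+1+2 = j+3 from rfl, show j+1+1 = j+2 from rfl] at hrec
      have hIH : tcnt H w u (j+1) = m.choose j := by
        have := IH (j+1) (by omega) (by omega) (by omega)
        simpa using this
      have hlvl : (lvlF H w (j+1)).card = (m+1).choose (j+1) :=
        lvl_card_eq hconn hK hF hreg hcard w (by omega)
      have p1 : (m+1).choose (j+2) = m.choose (j+1) + m.choose (j+2) := by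
        rw [show j+2 = (j+1)+1 from rfl, Nat.choose_succ_succ]
      have p2 : (m+1).choose (j+1) = m.choose j + m.choose (j+1) :=
        Nat.choose_succ_succ m j
      have hgoal : (m+1-1).choose (j+3-1) = m.choose (j+2) := by norm_num
      rw [hgoal]
      omega

lemma psi_card_filter {w x : V} {k : ℕ} (hk1 : 1 ≤ k) (hx : H.dist w x = k) :
    psi H w x = (H.neighborFinset w).filter (fun u => H.dist u x + 1 = k) := by
  rw [psi]
  refine Finset.filter_congr fun u hu => ?_
  have hwu : H.Adj w u := (H.mem_neighborFinset w u).mp hu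
  rcases dist_dichot hconn hK hF hreg hcard hwu hx with h | h
  · simp only [hx]; omega
  · simp only [hx]; omega

lemma sum_psi_card (hn : 1 ≤ n) {w : V} {k : ℕ} (hk1 : 1 ≤ k) (hk2 : k ≤ n) :
    ∑ x ∈ lvlF H w k, (psi H w x).card = n.choose k * k := by
  have step1 : ∑ x ∈ lvlF H w k, (psi H w x).card
      = ∑ x ∈ lvlF H w k, ((H.neighborFinset w).filter (fun u => H.dist u x + 1 = k)).card := by
    refine Finset.sum_congr rfl fun x hx => ?_
    rw [psi_card_filter hconn hK hF hreg hcard hk1 (mem_lvlF.mp hx)]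
  rw [step1, sum_card_filter_swap]
  have step2 : ∀ u ∈ H.neighborFinset w,
      ((lvlF H w k).filter (fun x => H.dist u x + 1 = k)).card = (n-1).choose (k-1) := by
    intro u hu
    exact tcnt_eq hconn hK hF hreg hcard ((H.mem_neighborFinset w u).mp hu) (by omega) k hk1 hk2
  rw [Finset.sum_congr rfl step2, Finset.sum_const]
  have hN : (H.neighborFinset w).card = n := hreg w
  rw [hN, smul_eq_mul]
  obtain ⟨m, rfl⟩ : ∃ m, n = m + 1 := ⟨n - 1, by omega⟩
  obtain ⟨j, rfl⟩ : ∃ j, k = j + 1 := ⟨k - 1, by omega⟩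
  simpa using Nat.add_one_mul_choose_eq m j


omit hK hF hreg hcard in
lemma psi_mono {w x z : V} (hadj : H.Adj x z) (hlt : H.dist w z + 1 = H.dist w x) :
    psi H w z ⊆ psi H w x := by
  intro u hu
  obtain ⟨hwu, hd⟩ := mem_psi.mp hu
  refine mem_psi.mpr ⟨hwu, ?_⟩
  have := adj_dist_le hconn (w := u) hadj.symm
  omega

omit hconn hK hF hreg hcard in
lemma psi_self (w : V) : psi H w w = ∅ := by
  rw [psi, Finset.filter_false_of_mem]
  intro u _
  rw [SimpleGraph.dist_self]
  omega

lemma down_surj_aux (w : V) {k : ℕ} (hk1 : 1 ≤ k)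
    (hA : ∀ z, H.dist w z = k - 1 → (psi H w z).card = k - 1)
    (hB : ∀ z z', H.dist w z = k - 1 → H.dist w z' = k - 1 → psi H w z = psi H w z' → z = z')
    {x : V} (hx : H.dist w x = k) (hAx : (psi H w x).card = k)
    {S : Finset V} (hS : S ⊆ psi H w x) (hScard : S.card = k - 1) :
    ∃ z, H.Adj x z ∧ H.dist w z = k - 1 ∧ psi H w z = S := by
  classical
  set D := (H.neighborFinset x).filter (fun z => H.dist w z = k - 1) with hD
  have hDcard : D.card = k := by
    have hkn : k ≤ n := hx ▸ dist_le_n hconn hK hF hreg w x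
    exact (cnt_exact hconn hK hF hreg hcard w hk1 hkn).1 x (mem_lvlF.mpr hx)
  have himage : D.image (fun z => psi H w z) ⊆ (psi H w x).powersetCard (k-1) := by
    intro S' hS'
    obtain ⟨z, hz, rfl⟩ := Finset.mem_image.mp hS'
    obtain ⟨hz1, hz2⟩ := Finset.mem_filter.mp hz
    refine Finset.mem_powersetCard.mpr ⟨?_, hA z hz2⟩
    exact psi_mono hconn ((H.mem_neighborFinset x z).mp hz1) (by omega)
  have hinj : Set.InjOn (fun z => psi H w z) D := by
    intro z hz z' hz' heq
    simp only [hD, Finset.mem_coe] at hz hz'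
    exact hB z z' (Finset.mem_filter.mp hz).2 (Finset.mem_filter.mp hz').2 heq
  have hicard : (D.image (fun z => psi H w z)).card = k := by
    rw [Finset.card_image_of_injOn hinj, hDcard]
  have hpcard : ((psi H w x).powersetCard (k-1)).card = k := by
    rw [Finset.card_powersetCard, hAx]
    obtain ⟨j, rfl⟩ : ∃ j, k = j + 1 := ⟨k - 1, by omega⟩
    simp [Nat.choose_succ_self_right]
  have hEq : D.image (fun z => psi H w z) = (psi H w x).powersetCard (k-1) :=
    Finset.eq_of_subset_of_card_le himage (by omega)
  have hSmem : S ∈ D.image (fun z => psi H w z) := by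
    rw [hEq]
    exact Finset.mem_powersetCard.mpr ⟨hS, hScard⟩
  obtain ⟨z, hz, hzS⟩ := Finset.mem_image.mp hSmem
  obtain ⟨hz1, hz2⟩ := Finset.mem_filter.mp hz
  exact ⟨z, (H.mem_neighborFinset x z).mp hz1, hz2, hzS⟩

lemma psi_AB (w : V) : ∀ k : ℕ,
    (∀ x, H.dist w x = k → (psi H w x).card = k) ∧
    (∀ x y, H.dist w x = k → H.dist w y = k → psi H w x = psi H w y → x = y) := by
  intro k
  induction k using Nat.strong_induction_on with
  | _ k IH =>
  rcases Nat.eq_zero_or_pos k with rfl | hk1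
  · constructor
    · intro x hx
      have : w = x := hconn.dist_eq_zero_iff.mp hx
      rw [← this, psi_self]
      simp
    · intro x y hx hy _
      have h1 : w = x := hconn.dist_eq_zero_iff.mp hx
      have h2 : w = y := hconn.dist_eq_zero_iff.mp hy
      rw [← h1, ← h2]
  have hA : ∀ x, H.dist w x = k → (psi H w x).card = k := by
    have low : ∀ x ∈ lvlF H w k, k ≤ (psi H w x).card := by
      intro x hx
      have hx' := mem_lvlF.mp hx
      rcases Nat.lt_or_ge k 2 with hk2 | hk2
      · -- k = 1
        have hk : k = 1 := by omega
        subst hk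
        have hadj : H.Adj w x := dist_eq_one_iff_adj.mp hx'
        have : x ∈ psi H w x := mem_psi.mpr ⟨hadj, by rw [SimpleGraph.dist_self]; omega⟩
        have := Finset.card_pos.mpr ⟨x, this⟩
        omega
      · -- k ≥ 2 : two distinct down-neighbours with distinct traces
        have hkn : k ≤ n := hx' ▸ dist_le_n hconn hK hF hreg w x
        have hDcard : ((H.neighborFinset x).filter (fun z => H.dist w z = k - 1)).card = k :=
          (cnt_exact hconn hK hF hreg hcard w (by omega) hkn).1 x hx
        obtain ⟨y, hy, y', hy', hyy'⟩ := Finset.one_lt_card.mp (by omega :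
          1 < ((H.neighborFinset x).filter (fun z => H.dist w z = k - 1)).card)
        obtain ⟨hy1, hy2⟩ := Finset.mem_filter.mp hy
        obtain ⟨hy1', hy2'⟩ := Finset.mem_filter.mp hy'
        have hsub : psi H w y ⊆ psi H w x :=
          psi_mono hconn ((H.mem_neighborFinset x y).mp hy1) (by omega)
        have hsub' : psi H w y' ⊆ psi H w x :=
          psi_mono hconn ((H.mem_neighborFinset x y').mp hy1') (by omega)
        have hcy : (psi H w y).card = k - 1 := (IH (k-1) (by omega)).1 y hy2
        have hcy' : (psi H w y').card = k - 1 := (IH (k-1) (by omega)).1 y' hy2'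
        by_contra hcon
        push_neg at hcon
        have h1 : psi H w y = psi H w x :=
          Finset.eq_of_subset_of_card_le hsub (by omega)
        have h2 : psi H w y' = psi H w x :=
          Finset.eq_of_subset_of_card_le hsub' (by omega)
        exact hyy' ((IH (k-1) (by omega)).2 y y' hy2 hy2' (h1.trans h2.symm))
    intro x hx
    have hkn : k ≤ n := hx ▸ dist_le_n hconn hK hF hreg w x
    have hsum := sum_psi_card hconn hK hF hreg hcard (show (1:ℕ) ≤ n by omega) (w := w) hk1 hkn
    have hL : (lvlF H w k).card = n.choose k := lvl_card_eq hconn hK hF hreg hcard w hkn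
    have heq : ∑ x ∈ lvlF H w k, (k : ℕ) = ∑ x ∈ lvlF H w k, (psi H w x).card := by
      rw [hsum, Finset.sum_const, hL, smul_eq_mul, Nat.mul_comm]
    exact ((Finset.sum_eq_sum_iff_of_le low).mp heq x (mem_lvlF.mpr hx)).symm
  refine ⟨hA, ?_⟩
  intro x y hx hy hpsi
  rcases Nat.lt_or_ge k 2 with hk2 | hk2
  · -- k = 1
    have hk : k = 1 := by omega
    subst hk
    have hxx : x ∈ psi H w x := mem_psi.mpr ⟨dist_eq_one_iff_adj.mp hx, by
      rw [SimpleGraph.dist_self]; omega⟩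
    have hyy : y ∈ psi H w y := mem_psi.mpr ⟨dist_eq_one_iff_adj.mp hy, by
      rw [SimpleGraph.dist_self]; omega⟩
    have hcx : (psi H w x).card = 1 := hA x hx
    obtain ⟨a, ha⟩ := Finset.card_eq_one.mp hcx
    rw [ha] at hxx
    rw [← hpsi, ha] at hyy
    rw [Finset.mem_singleton] at hxx hyy
    rw [hxx, hyy]
  · -- k ≥ 2
    by_contra hxy
    have hAB1 := IH (k-1) (by omega)
    have hsurj : ∀ x' : V, H.dist w x' = k → (psi H w x').card = k →
        ∀ S : Finset V, S ⊆ psi H w x' → S.card = k - 1 →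
        ∃ z, H.Adj x' z ∧ H.dist w z = k - 1 ∧ psi H w z = S :=
      fun x' h1 h2 S hS hc =>
        down_surj_aux hconn hK hF hreg hcard w hk1 hAB1.1 hAB1.2 h1 h2 hS hc
    have hP2 : 2 ≤ ((psi H w x).powersetCard (k-1)).card := by
      rw [Finset.card_powersetCard, hA x hx]
      obtain ⟨j, rfl⟩ : ∃ j, k = j + 1 := ⟨k - 1, by omega⟩
      simp only [Nat.add_sub_cancel, Nat.choose_succ_self_right]
      omega
    obtain ⟨S1, hS1, S2, hS2, hS12⟩ := Finset.one_lt_card.mp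
      (show 1 < ((psi H w x).powersetCard (k-1)).card by omega)
    obtain ⟨hS1sub, hS1card⟩ := Finset.mem_powersetCard.mp hS1
    obtain ⟨hS2sub, hS2card⟩ := Finset.mem_powersetCard.mp hS2
    obtain ⟨z1, hz1adj, hz1d, hz1psi⟩ := hsurj x hx (hA x hx) S1 hS1sub hS1card
    obtain ⟨z2, hz2adj, hz2d, hz2psi⟩ := hsurj x hx (hA x hx) S2 hS2sub hS2card
    obtain ⟨z1', hz1adj', hz1d', hz1psi'⟩ := hsurj y hy (hA y hy) S1 (hpsi ▸ hS1sub) hS1card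
    obtain ⟨z2', hz2adj', hz2d', hz2psi'⟩ := hsurj y hy (hA y hy) S2 (hpsi ▸ hS2sub) hS2card
    have hz1eq : z1 = z1' := hAB1.2 z1 z1' hz1d hz1d' (by rw [hz1psi, hz1psi'])
    have hz2eq : z2 = z2' := hAB1.2 z2 z2' hz2d hz2d' (by rw [hz2psi, hz2psi'])
    have hz12 : z1 ≠ z2 := fun h => hS12 (by rw [← hz1psi, ← hz2psi, h])
    rcases Nat.lt_or_ge k 3 with hk3 | hk3
    · -- k = 2 : use w as third common neighbour
      have hk : k = 2 := by omega
      subst hk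
      have hwz1 : H.Adj w z1 := dist_eq_one_iff_adj.mp (by omega)
      have hwz2 : H.Adj w z2 := dist_eq_one_iff_adj.mp (by omega)
      have hxw : x ≠ w := fun h => by rw [h, SimpleGraph.dist_self] at hx; omega
      have hyw : y ≠ w := fun h => by rw [h, SimpleGraph.dist_self] at hy; omega
      exact hK hz12 hxy hxw hyw hz1adj.symm (hz1eq ▸ hz1adj'.symm) hwz1.symm
        hz2adj.symm (hz2eq ▸ hz2adj'.symm) hwz2.symm
    · -- k ≥ 3 : third subset
      have hcard3 : 3 ≤ ((psi H w x).powersetCard (k-1)).card := by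
        rw [Finset.card_powersetCard, hA x hx]
        obtain ⟨j, rfl⟩ : ∃ j, k = j + 1 := ⟨k - 1, by omega⟩
        simp only [Nat.add_sub_cancel, Nat.choose_succ_self_right]
        omega
      have hne : (((psi H w x).powersetCard (k-1)) \ {S1, S2}).Nonempty := by
        rw [← Finset.card_pos]
        have h1 := Finset.le_card_sdiff ({S1, S2} : Finset (Finset V)) ((psi H w x).powersetCard (k-1))
        have h2 : ({S1, S2} : Finset (Finset V)).card ≤ 2 := Finset.card_insert_le _ _ |>.trans (by simp)
        omega
      obtain ⟨S3, hS3⟩ := hne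
      obtain ⟨hS3mem, hS3not⟩ := Finset.mem_sdiff.mp hS3
      obtain ⟨hS3sub, hS3card⟩ := Finset.mem_powersetCard.mp hS3mem
      obtain ⟨z3, hz3adj, hz3d, hz3psi⟩ := hsurj x hx (hA x hx) S3 hS3sub hS3card
      obtain ⟨z3', hz3adj', hz3d', hz3psi'⟩ := hsurj y hy (hA y hy) S3 (hpsi ▸ hS3sub) hS3card
      have hz3eq : z3 = z3' := hAB1.2 z3 z3' hz3d hz3d' (by rw [hz3psi, hz3psi'])
      have hS31 : S3 ≠ S1 := fun h => hS3not (by simp [h])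
      have hS32 : S3 ≠ S2 := fun h => hS3not (by simp [h])
      have hz13 : z1 ≠ z3 := fun h => hS31 (by rw [← hz1psi, ← hz3psi, h])
      have hz23 : z2 ≠ z3 := fun h => hS32 (by rw [← hz2psi, ← hz3psi, h])
      exact hK hxy hz12 hz13 hz23 hz1adj hz2adj hz3adj
        (hz1eq ▸ hz1adj') (hz2eq ▸ hz2adj') (hz3eq ▸ hz3adj')


lemma psi_card_eq (w x : V) : (psi H w x).card = H.dist w x :=
  (psi_AB hconn hK hF hreg hcard w (H.dist w x)).1 x rfl

lemma psi_inj (w : V) {x y : V} (h : psi H w x = psi H w y) : x = y := by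
  have hcx := psi_card_eq hconn hK hF hreg hcard w x
  have hcy := psi_card_eq hconn hK hF hreg hcard w y
  rw [h] at hcx
  have hd : H.dist w x = H.dist w y := by omega
  exact (psi_AB hconn hK hF hreg hcard w (H.dist w x)).2 x y rfl hd.symm h

lemma down_surj (w x : V) {S : Finset V} (hS : S ⊆ psi H w x)
    (hc : S.card + 1 = H.dist w x) : ∃ z, H.Adj x z ∧ psi H w z = S := by
  obtain ⟨z, hz1, _, hz3⟩ := down_surj_aux hconn hK hF hreg hcard w
    (show 1 ≤ H.dist w x by omega)
    (fun z hz => by rw [psi_card_eq hconn hK hF hreg hcard, hz])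
    (fun z z' _ _ h => psi_inj hconn hK hF hreg hcard w h)
    (x := x) rfl (psi_card_eq hconn hK hF hreg hcard w x) hS (by omega)
  exact ⟨z, hz1, hz3⟩

lemma adj_iff_psi (w : V) {x y : V} : H.Adj x y ↔
    (psi H w x ⊆ psi H w y ∧ (psi H w y).card = (psi H w x).card + 1) ∨
    (psi H w y ⊆ psi H w x ∧ (psi H w x).card = (psi H w y).card + 1) := by
  constructor
  · intro h
    have hne := no_horiz hconn hK hF hreg hcard w h
    have h1 := adj_dist_le hconn (w := w) h
    have h2 := adj_dist_le hconn (w := w) h.symm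
    have hcx := psi_card_eq hconn hK hF hreg hcard w x
    have hcy := psi_card_eq hconn hK hF hreg hcard w y
    rcases (show H.dist w y = H.dist w x + 1 ∨ H.dist w x = H.dist w y + 1 by omega) with hd | hd
    · exact Or.inl ⟨psi_mono hconn h.symm (by omega), by omega⟩
    · exact Or.inr ⟨psi_mono hconn h (by omega), by omega⟩
  · have hcx := psi_card_eq hconn hK hF hreg hcard w x
    have hcy := psi_card_eq hconn hK hF hreg hcard w y
    rintro (⟨hsub, hc⟩ | ⟨hsub, hc⟩)
    · obtain ⟨z, hz1, hz2⟩ := down_surj hconn hK hF hreg hcard w y hsub (by omega)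
      have : z = x := psi_inj hconn hK hF hreg hcard w hz2
      rw [this] at hz1
      exact hz1.symm
    · obtain ⟨z, hz1, hz2⟩ := down_surj hconn hK hF hreg hcard w x hsub (by omega)
      have : z = y := psi_inj hconn hK hF hreg hcard w hz2
      rw [this] at hz1
      exact hz1

omit hconn hK hF hreg hcard in
lemma psi_subset_nbr (w x : V) : psi H w x ⊆ H.neighborFinset w := Finset.filter_subset _ _

lemma adj_iff_delta (w : V) {x y : V} : H.Adj x y ↔
    ((psi H w x \ psi H w y) ∪ (psi H w y \ psi H w x)).card = 1 := by
  have hdisj : Disjoint (psi H w x \ psi H w y) (psi H w y \ psi H w x) :=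
    disjoint_sdiff_sdiff
  rw [Finset.card_union_of_disjoint hdisj]
  rw [adj_iff_psi hconn hK hF hreg hcard w]
  constructor
  · rintro (⟨hsub, hc⟩ | ⟨hsub, hc⟩)
    · rw [Finset.sdiff_eq_empty_iff_subset.mpr hsub]
      rw [Finset.card_sdiff_of_subset hsub]
      simp [hc]
    · rw [Finset.sdiff_eq_empty_iff_subset.mpr hsub]
      rw [Finset.card_sdiff_of_subset hsub]
      simp [hc]
  · intro hc
    rcases Nat.eq_zero_or_pos (psi H w x \ psi H w y).card with h0 | hpos
    · left
      have hsub : psi H w x ⊆ psi H w y :=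
        Finset.sdiff_eq_empty_iff_subset.mp (Finset.card_eq_zero.mp h0)
      refine ⟨hsub, ?_⟩
      have h1 : (psi H w y \ psi H w x).card = 1 := by omega
      have h2 := Finset.card_sdiff_of_subset hsub
      have h3 := Finset.card_le_card hsub
      omega
    · right
      have h0' : (psi H w y \ psi H w x).card = 0 := by omega
      have hsub : psi H w y ⊆ psi H w x :=
        Finset.sdiff_eq_empty_iff_subset.mp (Finset.card_eq_zero.mp h0')
      refine ⟨hsub, ?_⟩
      have h2 := Finset.card_sdiff_of_subset hsub
      have h3 := Finset.card_le_card hsub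
      omega

lemma main_iso (hn : 1 ≤ n) : Nonempty (H ≃g cubeGraph n) := by
  classical
  have hVpos : 0 < Fintype.card V := by rw [hcard]; positivity
  obtain ⟨w⟩ := Fintype.card_pos_iff.mp hVpos
  have hNcard : Fintype.card {u // u ∈ H.neighborFinset w} = n := by
    rw [Fintype.card_coe]; exact hreg w
  let g : {u // u ∈ H.neighborFinset w} ≃ Fin n :=
    Fintype.equivFinOfCardEq hNcard
  set f : V → (Fin n → Bool) := fun x i => decide ((g.symm i : V) ∈ psi H w x) with hf
  -- membership transfer
  have hmem : ∀ x y : V, f x = f y → psi H w x = psi H w y := by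
    intro x y hfeq
    ext u
    constructor
    · intro hu
      have huN : u ∈ H.neighborFinset w := psi_subset_nbr w x hu
      have h1 := congrFun hfeq (g ⟨u, huN⟩)
      simp only [hf, Equiv.symm_apply_apply, decide_eq_decide] at h1
      exact h1.mp hu
    · intro hu
      have huN : u ∈ H.neighborFinset w := psi_subset_nbr w y hu
      have h1 := congrFun hfeq (g ⟨u, huN⟩)
      simp only [hf, Equiv.symm_apply_apply, decide_eq_decide] at h1
      exact h1.mpr hu
  have hfinj : Function.Injective f := fun x y hfeq =>
    psi_inj hconn hK hF hreg hcard w (hmem x y hfeq)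
  have hfbij : Function.Bijective f := by
    rw [Fintype.bijective_iff_injective_and_card]
    exact ⟨hfinj, by rw [hcard]; simp⟩
  -- the unique-coordinate condition
  have hexu : ∀ x y : V, (∃! i, f x i ≠ f y i) ↔
      ((psi H w x \ psi H w y) ∪ (psi H w y \ psi H w x)).card = 1 := by
    intro x y
    set D := (psi H w x \ psi H w y) ∪ (psi H w y \ psi H w x) with hD
    have hDN : D ⊆ H.neighborFinset w := by
      intro u hu
      rcases Finset.mem_union.mp hu with h | h
      · exact psi_subset_nbr w x (Finset.mem_sdiff.mp h).1
      · exact psi_subset_nbr w y (Finset.mem_sdiff.mp h).1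
    have hmemD : ∀ u : V, u ∈ D ↔ (u ∈ psi H w x ∧ u ∉ psi H w y) ∨ (u ∈ psi H w y ∧ u ∉ psi H w x) := by
      intro u
      simp [hD, Finset.mem_union, Finset.mem_sdiff]
    constructor
    · rintro ⟨i, hi, huniq⟩
      have hu0 : (g.symm i : V) ∈ D := by
        rw [hmemD]
        simp only [hf, ne_eq, decide_eq_decide] at hi
        by_cases hx : (g.symm i : V) ∈ psi H w x
        · exact Or.inl ⟨hx, fun hy => hi ⟨fun _ => hy, fun _ => hx⟩⟩
        · refine Or.inr ⟨?_, hx⟩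
          by_contra hy
          exact hi ⟨fun h => absurd h hx, fun h => absurd h hy⟩
      rw [Finset.card_eq_one]
      refine ⟨(g.symm i : V), ?_⟩
      ext v
      rw [Finset.mem_singleton]
      constructor
      · intro hv
        have hvN : v ∈ H.neighborFinset w := hDN hv
        have hvi : f x (g ⟨v, hvN⟩) ≠ f y (g ⟨v, hvN⟩) := by
          simp only [hf, ne_eq, Equiv.symm_apply_apply, decide_eq_decide]
          rw [hmemD] at hv
          rcases hv with ⟨h1, h2⟩ | ⟨h1, h2⟩
          · exact fun h => h2 (h.mp h1)
          · exact fun h => h2 (h.mpr h1)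
        have := huniq _ hvi
        rw [← this]
        simp [Equiv.symm_apply_apply]
      · rintro rfl
        exact hu0
    · intro hc
      obtain ⟨u0, hu0⟩ := Finset.card_eq_one.mp hc
      have hu0D : u0 ∈ D := by rw [hu0]; exact Finset.mem_singleton_self u0
      have hu0N : u0 ∈ H.neighborFinset w := hDN hu0D
      refine ⟨g ⟨u0, hu0N⟩, ?_, ?_⟩
      · simp only [hf, ne_eq, Equiv.symm_apply_apply, decide_eq_decide]
        rw [hmemD] at hu0D
        rcases hu0D with ⟨h1, h2⟩ | ⟨h1, h2⟩
        · exact fun h => h2 (h.mp h1)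
        · exact fun h => h2 (h.mpr h1)
      · intro i hi
        have hvD : (g.symm i : V) ∈ D := by
          rw [hmemD]
          simp only [hf, ne_eq, decide_eq_decide] at hi
          by_cases hx : (g.symm i : V) ∈ psi H w x
          · exact Or.inl ⟨hx, fun hy => hi ⟨fun _ => hy, fun _ => hx⟩⟩
          · refine Or.inr ⟨?_, hx⟩
            by_contra hy
            exact hi ⟨fun h => absurd h hx, fun h => absurd h hy⟩
        rw [hu0, Finset.mem_singleton] at hvD
        have : g.symm i = ⟨u0, hu0N⟩ := Subtype.ext hvD
        rw [← this, Equiv.apply_symm_apply]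
  -- build the isomorphism
  refine ⟨⟨Equiv.ofBijective f hfbij, ?_⟩⟩
  intro x y
  show (cubeGraph n).Adj (f x) (f y) ↔ H.Adj x y
  rw [cubeGraph, SimpleGraph.fromRel_adj]
  constructor
  · rintro ⟨hne, h | h⟩
    · exact (adj_iff_delta hconn hK hF hreg hcard w).mpr ((hexu x y).mp h)
    · have : (∃! i, f y i ≠ f x i) := h
      have hd := (hexu y x).mp this
      have := (adj_iff_delta hconn hK hF hreg hcard w (x := y) (y := x)).mpr hd
      exact this.symm
  · intro h
    refine ⟨fun heq => (H.ne_of_adj h) (hfinj heq), Or.inl ?_⟩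
    exact (hexu x y).mpr ((adj_iff_delta hconn hK hF hreg hcard w).mp h)

end Reg2


/-! ### From the 4-cycle count to `FourProp` -/

/-- unordered 4-cycles, as in `numCycles4` -/
abbrev CycSet (H : SimpleGraph V) : Type _ :=
  {E : Finset (Sym2 V) // ∃ a b c d : V,
    ([a, b, c, d] : List V).Nodup ∧
    H.Adj a b ∧ H.Adj b c ∧ H.Adj c d ∧ H.Adj d a ∧
    E = {s(a, b), s(b, c), s(c, d), s(d, a)}}

/-- flags: a vertex together with a 2-subset of its neighbourhood -/
abbrev Flag (H : SimpleGraph V) [DecidableRel H.Adj] : Type _ :=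
  {ve : V × Finset V // ve.2 ∈ (H.neighborFinset ve.1).powersetCard 2}

lemma nodup4_iff {a b c d : V} :
    ([a,b,c,d] : List V).Nodup ↔ a ≠ b ∧ a ≠ c ∧ a ≠ d ∧ b ≠ c ∧ b ≠ d ∧ c ≠ d := by
  simp [List.nodup_cons, List.mem_cons]
  tauto

noncomputable def rA (C : CycSet H) : V := C.2.choose
noncomputable def rB (C : CycSet H) : V := C.2.choose_spec.choose
noncomputable def rC (C : CycSet H) : V := C.2.choose_spec.choose_spec.choose
noncomputable def rD (C : CycSet H) : V := C.2.choose_spec.choose_spec.choose_spec.choose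

lemma rep_spec (C : CycSet H) :
    ([rA C, rB C, rC C, rD C] : List V).Nodup ∧
    H.Adj (rA C) (rB C) ∧ H.Adj (rB C) (rC C) ∧ H.Adj (rC C) (rD C) ∧ H.Adj (rD C) (rA C) ∧
    C.1 = {s(rA C, rB C), s(rB C, rC C), s(rC C, rD C), s(rD C, rA C)} :=
  C.2.choose_spec.choose_spec.choose_spec.choose_spec

noncomputable def vtx (C : CycSet H) : Fin 4 → V
  | ⟨0, _⟩ => rA C
  | ⟨1, _⟩ => rB C
  | ⟨2, _⟩ => rC C
  | ⟨3, _⟩ => rD C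

noncomputable def pairF (C : CycSet H) : Fin 4 → Finset V
  | ⟨0, _⟩ => {rB C, rD C}
  | ⟨1, _⟩ => {rC C, rA C}
  | ⟨2, _⟩ => {rD C, rB C}
  | ⟨3, _⟩ => {rA C, rC C}

lemma perm4 {α : Type*} [DecidableEq α] {e1 e2 e3 e4 : α} :
    ({e1, e2, e3, e4} : Finset α) = {e2, e3, e4, e1} := by
  refine Finset.Subset.antisymm ?_ ?_ <;> simp only [Finset.insert_subset_iff,
    Finset.singleton_subset_iff, Finset.mem_insert, Finset.mem_singleton] <;> tauto

lemma rep_rot (C : CycSet H) (i : Fin 4) :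
    ∃ p q r : V, ([vtx C i, p, q, r] : List V).Nodup ∧
      H.Adj (vtx C i) p ∧ H.Adj p q ∧ H.Adj q r ∧ H.Adj r (vtx C i) ∧
      C.1 = {s(vtx C i, p), s(p, q), s(q, r), s(r, vtx C i)} ∧
      pairF C i = {p, r} := by
  obtain ⟨hnd, h1, h2, h3, h4, hE⟩ := rep_spec C
  rw [nodup4_iff] at hnd
  obtain ⟨nab, nac, nad, nbc, nbd, ncd⟩ := hnd
  match i with
  | ⟨0, _⟩ =>
    exact ⟨rB C, rC C, rD C, nodup4_iff.mpr ⟨nab, nac, nad, nbc, nbd, ncd⟩,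
      h1, h2, h3, h4, hE, rfl⟩
  | ⟨1, _⟩ =>
    exact ⟨rC C, rD C, rA C, nodup4_iff.mpr ⟨nbc, nbd, nab.symm, ncd, nac.symm, nad.symm⟩,
      h2, h3, h4, h1, hE.trans perm4, rfl⟩
  | ⟨2, _⟩ =>
    exact ⟨rD C, rA C, rB C, nodup4_iff.mpr ⟨ncd, nac.symm, nbc.symm, nad.symm, nbd.symm, nab⟩,
      h3, h4, h1, h2, hE.trans (perm4.trans perm4), rfl⟩
  | ⟨3, _⟩ =>
    exact ⟨rA C, rB C, rC C, nodup4_iff.mpr ⟨nad.symm, nbd.symm, ncd.symm, nab, nac, nbc⟩,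
      h4, h1, h2, h3, hE.trans (perm4.trans (perm4.trans perm4)), rfl⟩

noncomputable def hmap (C : CycSet H) (i : Fin 4) : Flag H := by
  refine ⟨(vtx C i, pairF C i), ?_⟩
  obtain ⟨p, q, r, hnd, h1, h2, h3, h4, hE, hp⟩ := rep_rot C i
  rw [nodup4_iff] at hnd
  obtain ⟨m1, m2, m3, m4, m5, m6⟩ := hnd
  show pairF C i ∈ _
  rw [hp]
  refine Finset.mem_powersetCard.mpr ⟨?_, Finset.card_pair m5⟩
  refine Finset.insert_subset ((H.mem_neighborFinset _ _).mpr h1) ?_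
  simpa using (H.mem_neighborFinset _ _).mpr h4.symm

lemma hmap_val (C : CycSet H) (i : Fin 4) : (hmap C i).1 = (vtx C i, pairF C i) := rfl

lemma cyc_eq_of_flag (hK : K23Free H) {v p q r p' q' r' : V}
    (h0 : ([v,p,q,r] : List V).Nodup)
    (h1 : H.Adj v p) (h2 : H.Adj p q) (h3 : H.Adj q r) (h4 : H.Adj r v)
    (h0' : ([v,p',q',r'] : List V).Nodup)
    (h1' : H.Adj v p') (h2' : H.Adj p' q') (h3' : H.Adj q' r') (h4' : H.Adj r' v)
    (hpair : ({p, r} : Finset V) = {p', r'}) :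
    ({s(v,p), s(p,q), s(q,r), s(r,v)} : Finset (Sym2 V))
      = {s(v,p'), s(p',q'), s(q',r'), s(r',v)} := by
  rw [nodup4_iff] at h0 h0'
  obtain ⟨a1, a2, a3, a4, a5, a6⟩ := h0
  obtain ⟨b1, b2, b3, b4, b5, b6⟩ := h0'
  have hp' : p' = p ∨ p' = r := by
    have : p' ∈ ({p, r} : Finset V) := by rw [hpair]; simp
    simpa using this
  have hr' : r' = p ∨ r' = r := by
    have : r' ∈ ({p, r} : Finset V) := by rw [hpair]; simp
    simpa using this
  clear hpair
  rcases hp' with rfl | rfl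
  · have hrr : r' = r := hr'.resolve_left (fun h => b5 h.symm)
    subst hrr
    have hq : q = q' := by
      by_contra hqq
      exact hK a5 a2 b2 hqq h1.symm h2 h2' h4 h3.symm h3'.symm
    subst hq
    rfl
  · have hrr : r' = p := hr'.resolve_right (fun h => b5 h.symm)
    subst hrr
    have hq : q = q' := by
      by_contra hqq
      exact hK a5 a2 b2 hqq h1.symm h2 h3'.symm h4 h3.symm h2'
    subst hq
    refine Finset.Subset.antisymm ?_ ?_ <;> simp only [Finset.insert_subset_iff,
      Finset.singleton_subset_iff, Finset.mem_insert, Finset.mem_singleton, Sym2.eq_iff] <;> tauto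

lemma hmap_inj (hK : K23Free H) :
    Function.Injective (fun Ci : CycSet H × Fin 4 => hmap Ci.1 Ci.2) := by
  rintro ⟨C, i⟩ ⟨C', i'⟩ heq
  have hval : (vtx C i, pairF C i) = (vtx C' i', pairF C' i') := by
    rw [← hmap_val, ← hmap_val]
    exact congrArg Subtype.val heq
  have hv : vtx C i = vtx C' i' := congrArg Prod.fst hval
  have he : pairF C i = pairF C' i' := congrArg Prod.snd hval
  obtain ⟨p, q, r, hnd, h1, h2, h3, h4, hE, hp⟩ := rep_rot C i
  obtain ⟨p', q', r', hnd', h1', h2', h3', h4', hE', hp'⟩ := rep_rot C' i'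
  rw [← hv] at hnd' h1' h4' hE'
  have hCC : C.1 = C'.1 := by
    rw [hE, hE']
    exact cyc_eq_of_flag hK hnd h1 h2 h3 h4 hnd' h1' h2' h3' h4'
      (by rw [← hp, ← hp', he])
  have hC : C = C' := Subtype.ext hCC
  subst hC
  have hii : i = i' := by
    obtain ⟨hnd0, -, -, -, -, -⟩ := rep_spec C
    rw [nodup4_iff] at hnd0
    obtain ⟨n1, n2, n3, n4, n5, n6⟩ := hnd0
    clear heq hval he hE hE' hp hp'
    fin_cases i <;> fin_cases i' <;> first | rfl | (simp only [vtx] at hv; first | exact absurd hv n1 | exact absurd hv.symm n1 | exact absurd hv n2 | exact absurd hv.symm n2 | exact absurd hv n3 | exact absurd hv.symm n3 | exact absurd hv n4 | exact absurd hv.symm n4 | exact absurd hv n5 | exact absurd hv.symm n5 | exact absurd hv n6 | exact absurd hv.symm n6)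
  rw [hii]


lemma flag_card {n : ℕ} (hreg : H.IsRegularOfDegree n) :
    Nat.card (Flag H) = Fintype.card V * n.choose 2 := by
  rw [Nat.card_eq_fintype_card]
  rw [Fintype.card_congr
    (Equiv.subtypeProdEquivSigmaSubtype (fun (v : V) (e : Finset V) =>
      e ∈ (H.neighborFinset v).powersetCard 2))]
  rw [Fintype.card_sigma]
  have : ∀ v : V, Fintype.card {e : Finset V // e ∈ (H.neighborFinset v).powersetCard 2}
      = n.choose 2 := by
    intro v
    rw [Fintype.card_coe, Finset.card_powersetCard,
      H.card_neighborFinset_eq_degree, hreg v]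
  rw [Finset.sum_congr rfl (fun v _ => this v), Finset.sum_const, Finset.card_univ,
    smul_eq_mul]

lemma cyc_card4 : Nat.card (CycSet H × Fin 4) = numCycles4 H * 4 := by
  rw [Nat.card_prod]
  have h1 : Nat.card (CycSet H) = numCycles4 H := rfl
  have h2 : Nat.card (Fin 4) = 4 := by simp
  rw [h1, h2]

lemma hmap_surj {n : ℕ} (hn : 2 ≤ n) (hreg : H.IsRegularOfDegree n)
    (hcard : Fintype.card V = 2 ^ n)
    (hc4 : numCycles4 H = 2 ^ (n - 2) * n.choose 2) (hK : K23Free H) :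
    Function.Surjective (fun Ci : CycSet H × Fin 4 => hmap Ci.1 Ci.2) := by
  have hbij : Function.Bijective (fun Ci : CycSet H × Fin 4 => hmap Ci.1 Ci.2) := by
    rw [Nat.bijective_iff_injective_and_card]
    refine ⟨hmap_inj hK, ?_⟩
    rw [cyc_card4, flag_card hreg, hc4, hcard]
    have hpow : 2 ^ (n - 2) * 4 = 2 ^ n := by
      have h1 : n - 2 + 2 = n := by omega
      calc 2 ^ (n-2) * 4 = 2 ^ (n-2) * 2 ^ 2 := by norm_num
      _ = 2 ^ (n - 2 + 2) := (pow_add 2 (n-2) 2).symm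
      _ = 2 ^ n := by rw [h1]
    calc 2 ^ (n-2) * n.choose 2 * 4 = 2 ^ (n-2) * 4 * n.choose 2 := by ring
    _ = 2 ^ n * n.choose 2 := by rw [hpow]
  exact hbij.surjective

lemma fourProp_of {n : ℕ} (hn : 2 ≤ n) (hreg : H.IsRegularOfDegree n)
    (hcard : Fintype.card V = 2 ^ n)
    (hc4 : numCycles4 H = 2 ^ (n - 2) * n.choose 2) (hK : K23Free H) :
    FourProp H := by
  intro v x y hvx hvy hxy
  have hflag : ({x, y} : Finset V) ∈ (H.neighborFinset v).powersetCard 2 := by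
    refine Finset.mem_powersetCard.mpr ⟨?_, Finset.card_pair hxy⟩
    refine Finset.insert_subset ((H.mem_neighborFinset _ _).mpr hvx) ?_
    simpa using (H.mem_neighborFinset _ _).mpr hvy
  obtain ⟨⟨C, i⟩, hCi⟩ := hmap_surj hn hreg hcard hc4 hK ⟨(v, {x, y}), hflag⟩
  have hval : (vtx C i, pairF C i) = (v, ({x, y} : Finset V)) := by
    rw [← hmap_val]
    exact congrArg Subtype.val hCi
  have hv : vtx C i = v := congrArg Prod.fst hval
  have he : pairF C i = {x, y} := congrArg Prod.snd hval
  obtain ⟨p, q, r, hnd, h1, h2, h3, h4, _, hp⟩ := rep_rot C i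
  rw [hv] at hnd h1 h4
  rw [hp] at he
  rw [nodup4_iff] at hnd
  obtain ⟨m1, m2, m3, m4, m5, m6⟩ := hnd
  have hpx : p = x ∨ p = y := by
    have : p ∈ ({x, y} : Finset V) := by rw [← he]; simp
    simpa using this
  have hrx : r = x ∨ r = y := by
    have : r ∈ ({x, y} : Finset V) := by rw [← he]; simp
    simpa using this
  refine ⟨q, fun h => m2 h.symm, ?_, ?_⟩
  · rcases hpx with rfl | rfl
    · exact h2
    · rcases hrx with rfl | rfl
      · exact h3.symm
      · exact absurd rfl m5
  · rcases hpx with rfl | rfl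
    · rcases hrx with rfl | rfl
      · exact absurd rfl m5
      · exact h3.symm
    · exact h2

lemma k23free_of
    (hK23 : ¬ ∃ u₁ u₂ w₁ w₂ w₃ : V, ([u₁, u₂, w₁, w₂, w₃] : List V).Nodup ∧
      H.Adj u₁ w₁ ∧ H.Adj u₁ w₂ ∧ H.Adj u₁ w₃ ∧
      H.Adj u₂ w₁ ∧ H.Adj u₂ w₂ ∧ H.Adj u₂ w₃) : K23Free H := by
  intro x y a b c hxy hab hac hbc hxa hxb hxc hya hyb hyc
  refine hK23 ⟨x, y, a, b, c, ?_, hxa, hxb, hxc, hya, hyb, hyc⟩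
  have q1 : x ≠ a := hxa.ne
  have q2 : x ≠ b := hxb.ne
  have q3 : x ≠ c := hxc.ne
  have q4 : y ≠ a := hya.ne
  have q5 : y ≠ b := hyb.ne
  have q6 : y ≠ c := hyc.ne
  simp only [List.nodup_cons, List.mem_cons, List.not_mem_nil, or_false,
    List.mem_singleton, List.nodup_nil, and_true]
  tauto

end CubeChar

theorem cube_characterization (n : ℕ) (hn : 2 ≤ n)
    {V : Type*} [Fintype V] [DecidableEq V]
    (H : SimpleGraph V) [DecidableRel H.Adj]
    (hconn : H.Connected) (hreg : H.IsRegularOfDegree n)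
    (hcard : Fintype.card V = 2 ^ n)
    (hc4 : numCycles4 H = 2 ^ (n - 2) * n.choose 2)
    (hK23 : ¬ ∃ u₁ u₂ w₁ w₂ w₃ : V, ([u₁, u₂, w₁, w₂, w₃] : List V).Nodup ∧
      H.Adj u₁ w₁ ∧ H.Adj u₁ w₂ ∧ H.Adj u₁ w₃ ∧
      H.Adj u₂ w₁ ∧ H.Adj u₂ w₂ ∧ H.Adj u₂ w₃) :
    Nonempty (H ≃g cubeGraph n) := by
  have hK : CubeChar.K23Free H := CubeChar.k23free_of hK23
  have hF : CubeChar.FourProp H := CubeChar.fourProp_of hn hreg hcard hc4 hK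
  exact CubeChar.main_iso hconn hK hF hreg hcard (by omega)
end

section
/- Let n ≥ 5. Let F_n be the fan graph, with vertices v_0, v_1, …, v_n where v_1, …, v_n form a path (edges v_i v_{i+1} for 1 ≤ i ≤ n−1) and v_0 is adjacent to every v_i for 1 ≤ i ≤ n. Let F_{n−1}^+ be the graph obtained from the fan F_{n−1} (on vertices v_0, v_1, …, v_{n−1}) by adding a new vertex v_n and the two edges v_{n−2} v_n and v_{n−1} v_n. Then F_n and F_{n−1}^+ are not Q-equivalent: there exist natural numbers i, j with q_{i,j}(F_n) ≠ q_{i,j}(F_{n−1}^+). -/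
open SimpleGraph

/-- `qij G i j` is the number of vertex subsets `X` with `|X| = i` such that the
induced subgraph `G[X]` has exactly `j` connected components. -/
noncomputable def qij {V : Type*} [Fintype V] (G : SimpleGraph V) (i j : ℕ) : ℕ :=
  Nat.card {X : Finset V // X.card = i ∧
    Nat.card (G.induce (X : Set V)).ConnectedComponent = j}

/-- Two graphs are `Q`-equivalent if they have the same subgraph component polynomial,
i.e. `q_{i,j}` agree for all `i, j`. -/
def QEquiv {V W : Type*} [Fintype V] [Fintype W]
    (G : SimpleGraph V) (H : SimpleGraph W) : Prop :=
  ∀ i j, qij G i j = qij H i j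

/-- The fan graph `Fₙ` on vertices `v₀, v₁, …, vₙ`: `v₁, …, vₙ` form a path and the
center `v₀` is adjacent to every `vᵢ`, `1 ≤ i ≤ n`. -/
def fanGraph (n : ℕ) : SimpleGraph (Fin (n + 1)) :=
  SimpleGraph.fromRel fun a b => a.val = 0 ∨ a.val + 1 = b.val

/-- The graph `Fₙ₋₁⁺`, obtained from the fan `Fₙ₋₁` on `v₀, v₁, …, vₙ₋₁` by adding a
new vertex `vₙ` together with the two edges `vₙ₋₂ vₙ` and `vₙ₋₁ vₙ`. -/
def fanPlusGraph (n : ℕ) : SimpleGraph (Fin (n + 1)) :=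
  SimpleGraph.fromRel fun a b =>
    (a.val = 0 ∧ b.val ≠ 0 ∧ b.val ≤ n - 1) ∨
    (a.val ≠ 0 ∧ a.val + 1 = b.val ∧ b.val ≤ n - 1) ∨
    (b.val = n ∧ (a.val = n - 1 ∨ a.val = n - 2))


lemma edgeless_walk_eq {α : Type*} {G : SimpleGraph α} (h : ∀ u v, ¬ G.Adj u v)
    {u v : α} (p : G.Walk u v) : u = v := by
  cases p with
  | nil => rfl
  | cons h' p => exact absurd h' (h _ _)

lemma card_cc_eq_iff {α : Type*} [Fintype α] (G : SimpleGraph α) :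
    Nat.card G.ConnectedComponent = Nat.card α ↔ ∀ u v, ¬ G.Adj u v := by
  constructor
  · intro hcard u v hadj
    have hsurj : Function.Surjective (G.connectedComponentMk) :=
      ConnectedComponent.ind (fun w => ⟨w, rfl⟩)
    have hbij : Function.Bijective (G.connectedComponentMk) := by
      rw [Nat.bijective_iff_surjective_and_card]
      exact ⟨hsurj, hcard.symm⟩
    have := hbij.injective (ConnectedComponent.sound hadj.reachable)
    exact G.ne_of_adj hadj this
  · intro h
    have hbij : Function.Bijective (G.connectedComponentMk) := by
      refine ⟨fun u v huv => ?_, ConnectedComponent.ind (fun w => ⟨w, rfl⟩)⟩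
      exact (ConnectedComponent.exact huv).elim (fun p => edgeless_walk_eq h p)
    exact (Nat.card_eq_of_bijective _ hbij).symm

lemma card_cc_induce_iff {V : Type*} [Fintype V] (G : SimpleGraph V) (X : Finset V)
    (hX : X.card = 3) :
    Nat.card (G.induce (X : Set V)).ConnectedComponent = 3 ↔
      ∀ u v, u ∈ X → v ∈ X → ¬ G.Adj u v := by
  have hV : Nat.card (X : Set V) = 3 := by
    rw [Nat.card_coe_set_eq, Set.ncard_coe_finset, hX]
  rw [← hV, card_cc_eq_iff]
  constructor
  · intro h u v hu hv hadj
    exact h ⟨u, by simpa using hu⟩ ⟨v, by simpa using hv⟩ (by simpa using hadj)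
  · intro h u v hadj
    exact h u v (by simp) (by simp) (by simpa using hadj)

lemma qij33 {V : Type*} [Fintype V] (G : SimpleGraph V) :
    qij G 3 3 = {X : Finset V | X.card = 3 ∧
      ∀ u v, u ∈ X → v ∈ X → ¬ G.Adj u v}.ncard := by
  rw [qij, ← Nat.card_coe_set_eq]
  exact Nat.card_congr (Equiv.subtypeEquivRight (fun X =>
    and_congr_right (fun h => card_cc_induce_iff G X h)))

lemma fan_to_plus {n : ℕ} (hn : 5 ≤ n) {X : Finset (Fin (n + 1))} (hX : X.card = 3)
    (hindep : ∀ u v, u ∈ X → v ∈ X → ¬ (fanPlusGraph n).Adj u v)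
    {u v : Fin (n + 1)} (hu : u ∈ X) (hv : v ∈ X) (hne : u ≠ v)
    (h : u.val = 0 ∨ u.val + 1 = v.val) : False := by
  have hvne : u.val ≠ v.val := fun hh => hne (Fin.ext hh)
  have hvlt : v.val ≤ n := Nat.lt_succ_iff.mp v.isLt
  rcases h with h | h
  · by_cases hvn : v.val = n
    · -- need a third vertex
      have hw : ∃ w ∈ X, w ≠ u ∧ w ≠ v := by
        by_contra hc
        push_neg at hc
        have hsub : X ⊆ {u, v} := by
          intro w hw
          by_cases hwu : w = u
          · simp [hwu]
          · simp [hc w hw hwu]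
        have := Finset.card_le_card hsub
        rw [hX, Finset.card_pair hne] at this
        omega
      obtain ⟨w, hwX, hwu, hwv⟩ := hw
      have hw0 : w.val ≠ 0 := fun hh => hwu (Fin.ext (hh.trans h.symm))
      have hwn : w.val ≠ n := fun hh => hwv (Fin.ext (hh.trans hvn.symm))
      have hwlt : w.val ≤ n := Nat.lt_succ_iff.mp w.isLt
      exact hindep u w hu hwX ((SimpleGraph.fromRel_adj _ _ _).mpr
        ⟨fun hh => hwu hh.symm, Or.inl (Or.inl ⟨h, hw0, by omega⟩)⟩)
    · exact hindep u v hu hv ((SimpleGraph.fromRel_adj _ _ _).mpr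
        ⟨hne, Or.inl (Or.inl ⟨h, by omega, by omega⟩)⟩)
  · by_cases hvn : v.val = n
    · exact hindep u v hu hv ((SimpleGraph.fromRel_adj _ _ _).mpr
        ⟨hne, Or.inl (Or.inr (Or.inr ⟨hvn, Or.inl (by omega)⟩))⟩)
    · by_cases hu0 : u.val = 0
      · exact hindep u v hu hv ((SimpleGraph.fromRel_adj _ _ _).mpr
          ⟨hne, Or.inl (Or.inl ⟨hu0, by omega, by omega⟩)⟩)
      · exact hindep u v hu hv ((SimpleGraph.fromRel_adj _ _ _).mpr
          ⟨hne, Or.inl (Or.inr (Or.inl ⟨hu0, h, by omega⟩))⟩)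

theorem fan_not_Q_equivalent_fanPlus (n : ℕ) (hn : 5 ≤ n) :
    ∃ i j : ℕ, qij (fanGraph n) i j ≠ qij (fanPlusGraph n) i j := by
  refine ⟨3, 3, ?_⟩
  rw [qij33, qij33]
  set Sfan := {X : Finset (Fin (n+1)) | X.card = 3 ∧
      ∀ u v, u ∈ X → v ∈ X → ¬ (fanGraph n).Adj u v} with hSfan
  set Splus := {X : Finset (Fin (n+1)) | X.card = 3 ∧
      ∀ u v, u ∈ X → v ∈ X → ¬ (fanPlusGraph n).Adj u v} with hSplus
  have hsub : Splus ⊆ Sfan := by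
    rintro X ⟨hX, hindep⟩
    refine ⟨hX, fun u v hu hv hadj => ?_⟩
    rw [fanGraph, SimpleGraph.fromRel_adj] at hadj
    obtain ⟨hne, hrel⟩ := hadj
    rcases hrel with h | h
    · exact fan_to_plus hn hX hindep hu hv hne h
    · exact fan_to_plus hn hX hindep hv hu hne.symm h
  -- witness
  set a : Fin (n+1) := ⟨1, by omega⟩ with ha
  set b : Fin (n+1) := ⟨n-2, by omega⟩ with hb
  set c : Fin (n+1) := ⟨n, by omega⟩ with hc
  set X₀ : Finset (Fin (n+1)) := {a, b, c} with hX₀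
  have hab : a ≠ b := by simp [ha, hb, Fin.ext_iff]; omega
  have hac : a ≠ c := by simp [ha, hc, Fin.ext_iff]; omega
  have hbc : b ≠ c := by simp [hb, hc, Fin.ext_iff]; omega
  have hcard : X₀.card = 3 := Finset.card_eq_three.mpr ⟨a, b, c, hab, hac, hbc, rfl⟩
  have hfan : X₀ ∈ Sfan := by
    refine ⟨hcard, fun u v hu hv hadj => ?_⟩
    rw [fanGraph, SimpleGraph.fromRel_adj] at hadj
    simp only [hX₀, Finset.mem_insert, Finset.mem_singleton] at hu hv
    obtain ⟨hne, hrel⟩ := hadj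
    rcases hu with rfl | rfl | rfl <;> rcases hv with rfl | rfl | rfl <;>
      simp [ha, hb, hc, Fin.ext_iff] at hne hrel ⊢ <;> omega
  have hnplus : X₀ ∉ Splus := by
    rintro ⟨-, hindep⟩
    refine hindep b c (by simp [hX₀]) (by simp [hX₀])
      ((SimpleGraph.fromRel_adj _ _ _).mpr ⟨hbc, Or.inl (Or.inr (Or.inr ?_))⟩)
    exact ⟨rfl, Or.inr rfl⟩
  have hss : Splus ⊂ Sfan := ⟨hsub, fun hh => hnplus (hh hfan)⟩
  exact (Set.ncard_lt_ncard hss (Set.toFinite _)).ne'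
end
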